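/- arXiv:0907.1122 — 4 statements merged into one kernel-verified Lean document; each statement's English description precedes it below -/
import Mathlib

section
/- Let n ≥ 2, 1 ≤ k ≤ n, and let S₁ be a primitive non-powerful signed digraph whose underlying digraph is D₁. Then L(S₁,k) = (2n-k)(n-1) + 1. -/
/-- There is a walk of length `l` from `u` to `v` in the digraph with arc relation `A`. -/
def HasWalk {n : ℕ} (A : Fin n → Fin n → Prop) (u v : Fin n) (l : ℕ) : Prop :=
  ∃ f : ℕ → Fin n, f 0 = u ∧ f l = v ∧ ∀ i < l, A (f i) (f (i + 1))

/-- A digraph is primitive if for some `p > 0` every ordered pair of vertices is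
joined by a walk of length exactly `p`. -/
def Primitive {n : ℕ} (A : Fin n → Fin n → Prop) : Prop :=
  ∃ p, 0 < p ∧ ∀ u v : Fin n, HasWalk A u v p

/-- `f` is the vertex sequence of a walk of length `l` from `u` to `v` in `A`. -/
def IsWalkSeq {n : ℕ} (A : Fin n → Fin n → Prop) (f : ℕ → Fin n) (u v : Fin n) (l : ℕ) : Prop :=
  f 0 = u ∧ f l = v ∧ ∀ i < l, A (f i) (f (i + 1))

/-- The sign of (the length-`l` initial part of) the walk with vertex sequence `f`
in the signed digraph `S`. -/
def walkSign {n : ℕ} (S : Fin n → Fin n → ℤ) (f : ℕ → Fin n) (l : ℕ) : ℤ :=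
  ∏ i ∈ Finset.range l, S (f i) (f (i + 1))

/-- The underlying digraph of a signed digraph `S`. -/
def Underlying {n : ℕ} (S : Fin n → Fin n → ℤ) : Fin n → Fin n → Prop :=
  fun u v => S u v ≠ 0

/-- All entries of `S` are in `{0, 1, -1}`: `S` is a sign pattern / signed digraph. -/
def SignPattern {n : ℕ} (S : Fin n → Fin n → ℤ) : Prop :=
  ∀ u v, S u v = 0 ∨ S u v = 1 ∨ S u v = -1

/-- There is a pair of SSSD walks of length `l` from `u` to `v`: two walks with the
same endpoints and length but different signs. -/
def HasSSSD {n : ℕ} (S : Fin n → Fin n → ℤ) (u v : Fin n) (l : ℕ) : Prop :=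
  ∃ f g : ℕ → Fin n, IsWalkSeq (Underlying S) f u v l ∧ IsWalkSeq (Underlying S) g u v l ∧
    walkSign S f l ≠ walkSign S g l

/-- A signed digraph is non-powerful iff it contains a pair of SSSD walks. -/
def NonPowerful {n : ℕ} (S : Fin n → Fin n → ℤ) : Prop :=
  ∃ u v l, HasSSSD S u v l

/-- `exp_D(X)`: the least `p` such that every vertex is reachable from some vertex
of `X` by a walk of length exactly `p`. -/
noncomputable def setExp {n : ℕ} (A : Fin n → Fin n → Prop) (X : Finset (Fin n)) : ℕ :=
  sInf {p | ∀ v, ∃ x ∈ X, HasWalk A x v p}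

/-- `F(D,k)`: the `k`th upper multiexponent. -/
noncomputable def upperMultiexp {n : ℕ} (A : Fin n → Fin n → Prop) (k : ℕ) : ℕ :=
  sSup {e | ∃ X : Finset (Fin n), X.card = k ∧ setExp A X = e}

/-- `l_S(X)`: the least `p` such that every vertex admits a pair of SSSD walks of
length `p` from some vertex of `X`. -/
noncomputable def setBase {n : ℕ} (S : Fin n → Fin n → ℤ) (X : Finset (Fin n)) : ℕ :=
  sInf {p | ∀ v, ∃ x ∈ X, HasSSSD S x v p}

/-- `L(S,k)`: the `k`th upper base. -/
noncomputable def upperBase {n : ℕ} (S : Fin n → Fin n → ℤ) (k : ℕ) : ℕ :=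
  sSup {e | ∃ X : Finset (Fin n), X.card = k ∧ setBase S X = e}

/-- Distance from `u` to `v` in the digraph `A`. -/
noncomputable def ddist {n : ℕ} (A : Fin n → Fin n → Prop) (u v : Fin n) : ℕ :=
  sInf {l | HasWalk A u v l}

/-- Diameter of the digraph `A`. -/
noncomputable def diam {n : ℕ} (A : Fin n → Fin n → Prop) : ℕ :=
  sSup {d | ∃ u v : Fin n, ddist A u v = d}

/-- `f` is the vertex sequence of a cycle of length `p` in `A`: a closed walk of
length `p` whose first `p` vertices are pairwise distinct. -/
def IsCycleSeq {n : ℕ} (A : Fin n → Fin n → Prop) (f : ℕ → Fin n) (p : ℕ) : Prop :=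
  0 < p ∧ f p = f 0 ∧ (∀ i < p, A (f i) (f (i + 1))) ∧
    ∀ i < p, ∀ j < p, f i = f j → i = j

/-- The digraph `D₁` on `{1,…,n}` (vertex `i` is index `i-1`): the Hamiltonian cycle
`1→2→⋯→n→1` together with the extra arc `(n-1)→1`. -/
def D1 (n : ℕ) : Fin n → Fin n → Prop := fun u v =>
  (v.val = u.val + 1) ∨ (u.val = n - 1 ∧ v.val = 0) ∨ (u.val = n - 2 ∧ v.val = 0)

/-- The digraph `D₂`: `D₁` together with the extra arc `(n)→2`. -/
def D2 (n : ℕ) : Fin n → Fin n → Prop := fun u v =>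
  D1 n u v ∨ (u.val = n - 1 ∧ v.val = 1)

/-- Isomorphism of digraphs on the same vertex set `Fin n`. -/
def DigraphIso {n : ℕ} (A B : Fin n → Fin n → Prop) : Prop :=
  ∃ e : Fin n ≃ Fin n, ∀ u v, A u v ↔ B (e u) (e v)

/-!
Switching at the signs of the paths `0 → 1 → ⋯ → w` makes every arc `i → i + 1` positive. A walk
of length `l` from `u` to `v` using the arcs `n - 2 → 0` and `n - 1 → 0` (which close `C_{n-1}`
and `C_n`) `A` and `B` times then satisfies `l + u = v + A (n - 1) + B n` and has sign
`sgn(C_{n-1}) ^ A * sgn(C_n) ^ B`. As `n - 1` and `n` are coprime, two walks with the same ends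
and length differ by trading `t n` short cycles for `t (n - 1)` long ones, which multiplies the
sign by `κ ^ t` with `κ = sgn(C_{n-1}) ^ n * sgn(C_n) ^ (n - 1)`. Non-powerfulness forces
`κ = -1`, and then SSSD walks of length `l` from `u` to `v` exist exactly when some walk of that
length has `A ≥ n`. For `p = (2n - k)(n - 1) + 1` this fails from a vertex `x` only for `k - 1`
residues of `x - v` modulo `n`, so every `k`-set works; the set `{n - k, …, n - 1}` fails for
every smaller `p`.
-/

section

variable {n : ℕ}

def HasSignedWalk (A : Fin n → Fin n → Prop) (σ : Fin n → Fin n → ℤ) (u v : Fin n) (l : ℕ)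
    (s : ℤ) : Prop :=
  ∃ f, IsWalkSeq A f u v l ∧ walkSign σ f l = s

namespace HasSignedWalk

variable {A : Fin n → Fin n → Prop} {σ : Fin n → Fin n → ℤ} {u v w : Fin n} {l l₁ l₂ : ℕ}
  {s s₁ s₂ : ℤ}

theorem refl (u : Fin n) : HasSignedWalk A σ u u 0 1 :=
  ⟨fun _ => u, ⟨rfl, rfl, by simp⟩, by simp [walkSign]⟩

theorem single (h : A u v) : HasSignedWalk A σ u v 1 (σ u v) :=
  ⟨fun i => if i = 0 then u else v, ⟨rfl, rfl, by simpa using h⟩, by simp [walkSign]⟩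

theorem append (h₁ : HasSignedWalk A σ u w l₁ s₁) (h₂ : HasSignedWalk A σ w v l₂ s₂) :
    HasSignedWalk A σ u v (l₁ + l₂) (s₁ * s₂) := by
  obtain ⟨f, ⟨hf0, hfl, hf⟩, rfl⟩ := h₁
  obtain ⟨g, ⟨hg0, hgl, hg⟩, rfl⟩ := h₂
  obtain ⟨h, hleft, hright⟩ : ∃ h : ℕ → Fin n, (∀ i ≤ l₁, h i = f i) ∧ ∀ i, h (l₁ + i) = g i :=
    ⟨fun i => if i ≤ l₁ then f i else g (i - l₁), fun i hi => by simp [hi], fun i => by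
      rcases i with _ | i
      · simp [hfl, hg0]
      · simp⟩
  refine ⟨h, ⟨by rw [hleft 0 (Nat.zero_le _), hf0], ?_, fun i hi => ?_⟩, ?_⟩
  · rw [hright, hgl]
  · rcases lt_or_ge i l₁ with hi₁ | hi₁
    · rw [hleft i hi₁.le, hleft (i + 1) hi₁]; exact hf i hi₁
    · obtain ⟨j, rfl⟩ := Nat.exists_eq_add_of_le hi₁
      rw [hright, add_assoc, hright]; exact hg j (by omega)
  · rw [walkSign, Finset.prod_range_add]
    congr 1
    · exact Finset.prod_congr rfl fun i hi => by
        rw [hleft i (Finset.mem_range.1 hi).le, hleft (i + 1) (Finset.mem_range.1 hi)]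
    · exact Finset.prod_congr rfl fun i _ => by rw [hright, add_assoc, hright]

theorem zero_iff : HasSignedWalk A σ u v 0 s ↔ u = v ∧ s = 1 := by
  refine ⟨fun ⟨f, ⟨hf0, hfl, _⟩, hs⟩ => ⟨hf0.symm.trans hfl, by simp [← hs, walkSign]⟩, ?_⟩
  rintro ⟨rfl, rfl⟩
  exact refl u

theorem exists_cons (h : HasSignedWalk A σ u v (l + 1) s) :
    ∃ w s', A u w ∧ HasSignedWalk A σ w v l s' ∧ s = σ u w * s' := by
  obtain ⟨f, ⟨hf0, hfl, hf⟩, rfl⟩ := h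
  refine ⟨f 1, walkSign σ (fun i => f (i + 1)) l, hf0 ▸ hf 0 (by omega),
    ⟨_, ⟨rfl, hfl, fun i hi => hf (i + 1) (by omega)⟩, rfl⟩, ?_⟩
  rw [walkSign, Finset.prod_range_succ', hf0, mul_comm]
  rfl

end HasSignedWalk

def switch (φ : Fin n → ℤ) (S : Fin n → Fin n → ℤ) : Fin n → Fin n → ℤ :=
  fun u v => φ u * S u v * φ v

theorem walkSign_switch {φ : Fin n → ℤ} (hφ : ∀ v, φ v * φ v = 1) (S : Fin n → Fin n → ℤ)
    (f : ℕ → Fin n) (l : ℕ) : walkSign (switch φ S) f l = φ (f 0) * walkSign S f l * φ (f l) := by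
  induction l with
  | zero => simp [walkSign, hφ]
  | succ l ih =>
    simp only [walkSign, Finset.prod_range_succ] at ih ⊢
    rw [ih, switch]
    linear_combination (φ (f 0) * (∏ i ∈ Finset.range l, S (f i) (f (i + 1))) *
      S (f l) (f (l + 1)) * φ (f (l + 1))) * hφ (f l)

theorem hasSSSD_iff_switch {S : Fin n → Fin n → ℤ} {φ : Fin n → ℤ} (hφ : ∀ v, φ v * φ v = 1)
    {u v : Fin n} {l : ℕ} :
    HasSSSD S u v l ↔ ∃ s s', HasSignedWalk (Underlying S) (switch φ S) u v l s ∧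
      HasSignedWalk (Underlying S) (switch φ S) u v l s' ∧ s ≠ s' := by
  have hcancel : ∀ a b : ℤ, φ u * a * φ v = φ u * b * φ v ↔ a = b := fun a b => by
    constructor
    · intro h
      linear_combination (φ u * φ v) * h - (a - b) * φ v * φ v * hφ u - (a - b) * hφ v
    · rintro rfl; rfl
  constructor
  · rintro ⟨f, g, hf, hg, hne⟩
    refine ⟨_, _, ⟨f, hf, rfl⟩, ⟨g, hg, rfl⟩, ?_⟩
    rwa [walkSign_switch hφ, walkSign_switch hφ, hf.1, hf.2.1, hg.1, hg.2.1, Ne, hcancel]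
  · rintro ⟨_, _, ⟨f, hf, rfl⟩, ⟨g, hg, rfl⟩, hne⟩
    refine ⟨f, g, hf, hg, ?_⟩
    rwa [walkSign_switch hφ, walkSign_switch hφ, hf.1, hf.2.1, hg.1, hg.2.1, Ne, hcancel] at hne

theorem Nat.exists_eq_add_mul_of_mul_add_mul_eq {a b A B A' B' : ℕ} (hab : Nat.Coprime a b)
    (hb : 0 < b) (h : A * a + B * b = A' * a + B' * b) (hA : A' ≤ A) :
    ∃ t, A = A' + t * b ∧ B' = B + t * a := by
  have hB : B ≤ B' := by
    by_contra! hB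
    nlinarith [Nat.mul_le_mul_right a hA]
  have hsub : (A - A') * a = (B' - B) * b := by
    rw [Nat.sub_mul, Nat.sub_mul]; omega
  obtain ⟨t, ht⟩ : b ∣ A - A' := hab.symm.dvd_of_dvd_mul_right ⟨B' - B, by rw [hsub, mul_comm]⟩
  refine ⟨t, by rw [mul_comm]; omega, ?_⟩
  have := Nat.eq_of_mul_eq_mul_right hb (show t * a * b = (B' - B) * b by rw [← hsub, ht]; ring)
  omega

theorem pow_add_mul_mul_pow_mul_pow_mul_pow_add_mul {R : Type*} [CommRing R] {x y : R}
    (hx : x * x = 1) (hy : y * y = 1) (a b m k t : ℕ) :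
    x ^ (a + t * m) * y ^ b * (x ^ a * y ^ (b + t * k)) = (x ^ m * y ^ k) ^ t := by
  have hxa : x ^ a * x ^ a = 1 := by rw [← mul_pow, hx, one_pow]
  have hyb : y ^ b * y ^ b = 1 := by rw [← mul_pow, hy, one_pow]
  rw [pow_add, pow_add, pow_mul', pow_mul', mul_pow]
  linear_combination ((x ^ m) ^ t * (y ^ k) ^ t * y ^ b * y ^ b) * hxa +
    ((x ^ m) ^ t * (y ^ k) ^ t) * hyb

theorem isUnit_of_signPattern {S : Fin n → Fin n → ℤ} (hsp : SignPattern S) {u v : Fin n}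
    (h : Underlying S u v) : IsUnit (S u v) := by
  rcases hsp u v with h0 | h1 | h1
  · exact absurd h0 h
  · simp [h1]
  · simp [h1]

theorem upperBase_eq_of_forall {S : Fin n → Fin n → ℤ} {k P : ℕ}
    (hle : ∀ X : Finset (Fin n), X.card = k → ∀ v, ∃ x ∈ X, HasSSSD S x v P)
    {X₀ : Finset (Fin n)} (hX₀ : X₀.card = k) (hlt : ∀ p < P, ∃ v, ∀ x ∈ X₀, ¬ HasSSSD S x v p) :
    upperBase S k = P := by
  have hmem {X : Finset (Fin n)} (hX : X.card = k) : P ∈ {p | ∀ v, ∃ x ∈ X, HasSSSD S x v p} :=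
    hle X hX
  have hX₀P : setBase S X₀ = P := by
    refine le_antisymm (Nat.sInf_le (hmem hX₀)) (le_csInf ⟨P, hmem hX₀⟩ fun q hq => ?_)
    by_contra! hqP
    obtain ⟨v, hv⟩ := hlt q hqP
    obtain ⟨x, hx, hxv⟩ := hq v
    exact hv x hx hxv
  exact IsGreatest.csSup_eq ⟨⟨X₀, hX₀, hX₀P⟩, by rintro _ ⟨X, hX, rfl⟩; exact Nat.sInf_le (hmem hX)⟩

end

namespace D1

open Fin.NatCast

section Walks

variable {n : ℕ} [NeZero n]

def pathSign (S : Fin n → Fin n → ℤ) (w : Fin n) : ℤ :=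
  ∏ i ∈ Finset.range w.val, S i ((i + 1 : ℕ) : Fin n)

/-- Switching at the path signs makes every arc `i → i + 1` positive. -/
def normalize (S : Fin n → Fin n → ℤ) : Fin n → Fin n → ℤ :=
  switch (pathSign S) S

/-- `sgn(C_{n-1})`. -/
def shortSign (S : Fin n → Fin n → ℤ) : ℤ :=
  normalize S ((n - 2 : ℕ) : Fin n) 0

/-- `sgn(C_n)`. -/
def longSign (S : Fin n → Fin n → ℤ) : ℤ :=
  normalize S ((n - 1 : ℕ) : Fin n) 0

theorem val_natCast_sub_one : (((n - 1 : ℕ) : Fin n) : ℕ) = n - 1 :=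
  Fin.val_cast_of_lt (Nat.sub_lt (NeZero.pos n) Nat.one_pos)

variable {S : Fin n → Fin n → ℤ} (hS : ∀ ⦃u v⦄, D1 n u v → IsUnit (S u v))
include hS

theorem isUnit_pathSign (w : Fin n) : IsUnit (pathSign S w) :=
  IsUnit.prod_iff.2 fun i hi => hS <| Or.inl <| by
    have := Finset.mem_range.1 hi
    rw [Fin.val_cast_of_lt (by omega), Fin.val_cast_of_lt (by omega)]

theorem pathSign_mul_self (w : Fin n) : pathSign S w * pathSign S w = 1 :=
  Int.isUnit_mul_self (isUnit_pathSign hS w)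

theorem isUnit_normalize {u v : Fin n} (h : D1 n u v) : IsUnit (normalize S u v) :=
  ((isUnit_pathSign hS u).mul (hS h)).mul (isUnit_pathSign hS v)

theorem normalize_eq_one_of_succ {u v : Fin n} (h : v.val = u.val + 1) : normalize S u v = 1 := by
  have hv : pathSign S v = pathSign S u * S u v := by
    rw [pathSign, h, Finset.prod_range_succ, ← pathSign, Fin.cast_val_eq_self, ← h,
      Fin.cast_val_eq_self]
  rw [normalize, switch, hv]
  linear_combination (S u v * S u v) * pathSign_mul_self hS u + Int.isUnit_mul_self (hS (Or.inl h))

theorem normalize_cases {u v : Fin n} (h : D1 n u v) :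
    (v.val = u.val + 1 ∧ normalize S u v = 1) ∨
      (u.val = n - 1 ∧ v.val = 0 ∧ normalize S u v = longSign S) ∨
      (u.val = n - 2 ∧ v.val = 0 ∧ normalize S u v = shortSign S) := by
  have hv0 {v : Fin n} (hv : v.val = 0) : v = 0 := Fin.ext hv
  have hcast {u : Fin n} {j : ℕ} (hu : u.val = j) : u = (j : Fin n) := by
    rw [← hu, Fin.cast_val_eq_self]
  rcases h with h | ⟨hu, hv⟩ | ⟨hu, hv⟩
  · exact Or.inl ⟨h, normalize_eq_one_of_succ hS h⟩
  · exact Or.inr <| Or.inl ⟨hu, hv, by rw [longSign, ← hcast hu, ← hv0 hv]⟩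
  · exact Or.inr <| Or.inr ⟨hu, hv, by rw [shortSign, ← hcast hu, ← hv0 hv]⟩

theorem isUnit_shortSign (hn : 2 ≤ n) : IsUnit (shortSign S) :=
  isUnit_normalize hS <| Or.inr <| Or.inr ⟨Fin.val_cast_of_lt (by omega), rfl⟩

theorem isUnit_longSign : IsUnit (longSign S) :=
  isUnit_normalize hS <| Or.inr <| Or.inl ⟨val_natCast_sub_one, rfl⟩

theorem exists_winding (hn : 2 ≤ n) {u v : Fin n} {l : ℕ} {s : ℤ}
    (h : HasSignedWalk (D1 n) (normalize S) u v l s) :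
    ∃ A B, l + u.val = v.val + A * (n - 1) + B * n ∧ s = shortSign S ^ A * longSign S ^ B ∧
      (u.val = n - 1 → A + B ≠ 0 → 0 < B) := by
  induction l generalizing u s with
  | zero =>
    obtain ⟨rfl, rfl⟩ := HasSignedWalk.zero_iff.1 h
    exact ⟨0, 0, by simp, by simp, by simp⟩
  | succ l ih =>
    obtain ⟨w, s', harc, hw, rfl⟩ := h.exists_cons
    obtain ⟨A, B, hl, rfl, -⟩ := ih hw
    have := w.isLt
    rcases normalize_cases hS harc with ⟨hsucc, hσ⟩ | ⟨hu, hw0, hσ⟩ | ⟨hu, hw0, hσ⟩ <;> rw [hσ]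
    · exact ⟨A, B, by omega, by ring, by omega⟩
    · exact ⟨A, B + 1, by rw [add_mul]; omega, by ring, fun _ _ => by omega⟩
    · exact ⟨A + 1, B, by rw [add_mul]; omega, by ring, by omega⟩

theorem hasSignedWalk_path {u v : Fin n} (h : u ≤ v) :
    HasSignedWalk (D1 n) (normalize S) u v (v.val - u.val) 1 := by
  suffices ∀ d, u.val + d < n →
      HasSignedWalk (D1 n) (normalize S) u ((u.val + d : ℕ) : Fin n) d 1 by
    have := this (v.val - u.val) (by omega)
    rwa [Nat.add_sub_cancel' (Fin.le_def.1 h), Fin.cast_val_eq_self] at this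
  intro d
  induction d with
  | zero => intro _; simpa using HasSignedWalk.refl u
  | succ d ih =>
    intro hd
    have hsucc : (((u.val + (d + 1) : ℕ) : Fin n) : ℕ) = ((u.val + d : ℕ) : Fin n).val + 1 := by
      rw [Fin.val_cast_of_lt hd, Fin.val_cast_of_lt (by omega), add_assoc]
    have := (ih (by omega)).append (.single (Or.inl hsucc))
    rwa [normalize_eq_one_of_succ hS hsucc, one_mul] at this

theorem hasSignedWalk_longSign (u : Fin n) :
    HasSignedWalk (D1 n) (normalize S) u 0 (n - u.val) (longSign S) := by
  have hlast : (((n - 1 : ℕ) : Fin n) : ℕ) = n - 1 := val_natCast_sub_one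
  have hpath := hasSignedWalk_path hS (u := u) (v := ((n - 1 : ℕ) : Fin n))
    (Fin.le_def.2 (by rw [hlast]; omega))
  have := hpath.append (.single (v := 0) (Or.inr (Or.inl ⟨hlast, rfl⟩)))
  rw [hlast, one_mul, ← longSign, show n - 1 - u.val + 1 = n - u.val by omega] at this
  exact this

theorem hasSignedWalk_shortSign (hn : 2 ≤ n) {u : Fin n} (hu : u.val ≤ n - 2) :
    HasSignedWalk (D1 n) (normalize S) u 0 (n - 1 - u.val) (shortSign S) := by
  have hpen : (((n - 2 : ℕ) : Fin n) : ℕ) = n - 2 := Fin.val_cast_of_lt (by omega)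
  have hpath := hasSignedWalk_path hS (u := u) (v := ((n - 2 : ℕ) : Fin n))
    (Fin.le_def.2 (by rw [hpen]; omega))
  have := hpath.append (.single (v := 0) (Or.inr (Or.inr ⟨hpen, rfl⟩)))
  rw [hpen, one_mul, ← shortSign, show n - 2 - u.val + 1 = n - 1 - u.val by omega] at this
  exact this

theorem hasSignedWalk_loop (hn : 2 ≤ n) (A B : ℕ) :
    HasSignedWalk (D1 n) (normalize S) 0 0 (A * (n - 1) + B * n)
      (shortSign S ^ A * longSign S ^ B) := by
  induction A with
  | zero =>
    induction B with
    | zero => simpa using HasSignedWalk.refl 0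
    | succ B ih =>
      convert (hasSignedWalk_longSign hS 0).append ih using 1
      · simp only [Fin.val_zero, Nat.sub_zero]; ring
      · ring
  | succ A ih =>
    convert (hasSignedWalk_shortSign hS hn (u := 0) (Nat.zero_le _)).append ih using 1
    · simp only [Fin.val_zero, Nat.sub_zero]; ring
    · ring

theorem hasSignedWalk_of_winding (hn : 2 ≤ n) {u v : Fin n} {l A B : ℕ}
    (hl : l + u.val = v.val + A * (n - 1) + B * n) (hB : u.val = n - 1 → A + B ≠ 0 → 0 < B) :
    HasSignedWalk (D1 n) (normalize S) u v l (shortSign S ^ A * longSign S ^ B) := by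
  have hpath := hasSignedWalk_path hS (Fin.zero_le v)
  rcases B with _ | B
  · rcases A with _ | A
    · convert hasSignedWalk_path hS (Fin.le_def.2 (by omega : u.val ≤ v.val)) using 1
      · omega
      · simp
    · have hu : u.val ≤ n - 2 := by
        have := u.isLt
        by_contra
        exact absurd (hB (by omega) (by omega)) (lt_irrefl 0)
      convert ((hasSignedWalk_shortSign hS hn hu).append (hasSignedWalk_loop hS hn A 0)).append
        hpath using 1
      · have := add_mul A 1 (n - 1)
        simp only [Fin.val_zero]
        omega
      · ring
  · convert ((hasSignedWalk_longSign hS u).append (hasSignedWalk_loop hS hn A B)).append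
      hpath using 1
    · have := add_mul B 1 n
      have := u.isLt
      simp only [Fin.val_zero]
      omega
    · ring

/-- Since `n - 1` and `n` are coprime, two windings of the same length differ by a multiple of
`(n, -(n - 1))`. -/
theorem exists_winding_pair (hn : 2 ≤ n) {u v : Fin n} {l : ℕ} {s s' : ℤ}
    (h : HasSignedWalk (D1 n) (normalize S) u v l s)
    (h' : HasSignedWalk (D1 n) (normalize S) u v l s') :
    ∃ A B t, l + u.val = v.val + A * (n - 1) + B * n ∧ t * n ≤ A ∧
      (u.val = n - 1 → A + B ≠ 0 → 0 < B) ∧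
      s * s' = (shortSign S ^ n * longSign S ^ (n - 1)) ^ t := by
  have hcop : Nat.Coprime (n - 1) n :=
    (Nat.coprime_self_sub_left (by omega)).2 (Nat.coprime_one_left n)
  have key : ∀ A B A' B', A * (n - 1) + B * n = A' * (n - 1) + B' * n → A' ≤ A →
      ∃ t, t * n ≤ A ∧ shortSign S ^ A * longSign S ^ B * (shortSign S ^ A' * longSign S ^ B') =
        (shortSign S ^ n * longSign S ^ (n - 1)) ^ t := by
    intro A B A' B' heq hle
    obtain ⟨t, rfl, rfl⟩ := Nat.exists_eq_add_mul_of_mul_add_mul_eq hcop (by omega) heq hle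
    exact ⟨t, by omega, pow_add_mul_mul_pow_mul_pow_mul_pow_add_mul
      (Int.isUnit_mul_self (isUnit_shortSign hS hn)) (Int.isUnit_mul_self (isUnit_longSign hS)) ..⟩
  obtain ⟨A, B, hl, rfl, hB⟩ := exists_winding hS hn h
  obtain ⟨A', B', hl', rfl, hB'⟩ := exists_winding hS hn h'
  rcases le_total A' A with hle | hle
  · obtain ⟨t, ht, hs⟩ := key A B A' B' (by omega) hle
    exact ⟨A, B, t, hl, ht, hB, hs⟩
  · obtain ⟨t, ht, hs⟩ := key A' B' A B (by omega) hle
    exact ⟨A', B', t, hl', ht, hB', by rw [mul_comm, hs]⟩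

end Walks

/-- `p` is the length of an SSSD pair from `x` to `v` in a non-powerful signing of `D₁`: some
walk of length `p` uses the short cycle `A ≥ n` times and the long one `B` times (at least once if
`x = n - 1`, whose only out-arc closes the long cycle). -/
def IsSSSDLength (n x v p : ℕ) : Prop :=
  ∃ A B, p + x = v + A * (n - 1) + B * n ∧ n ≤ A ∧ (x = n - 1 → 0 < B)

section SSSD

variable {n : ℕ} [NeZero n] {S : Fin n → Fin n → ℤ} (hS : ∀ ⦃u v⦄, D1 n u v → IsUnit (S u v))
  (hund : ∀ u v, Underlying S u v ↔ D1 n u v)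
include hS hund

theorem hasSSSD_iff_normalize {u v : Fin n} {l : ℕ} :
    HasSSSD S u v l ↔ ∃ s s', HasSignedWalk (D1 n) (normalize S) u v l s ∧
      HasSignedWalk (D1 n) (normalize S) u v l s' ∧ s ≠ s' := by
  rw [hasSSSD_iff_switch (pathSign_mul_self hS),
    show Underlying S = D1 n from funext₂ fun u v => propext (hund u v)]
  rfl

theorem shortSign_pow_mul_longSign_pow (hn : 2 ≤ n) (hnp : NonPowerful S) :
    shortSign S ^ n * longSign S ^ (n - 1) = -1 := by
  obtain ⟨u, v, l, hsssd⟩ := hnp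
  obtain ⟨s, s', h, h', hne⟩ := (hasSSSD_iff_normalize hS hund).1 hsssd
  obtain ⟨A, B, t, -, -, -, hss'⟩ := exists_winding_pair hS hn h h'
  rcases Int.isUnit_iff.1 (((isUnit_shortSign hS hn).pow n).mul ((isUnit_longSign hS).pow (n - 1)))
    with h1 | h1
  · rw [h1, one_pow] at hss'
    exact absurd (Int.eq_of_mul_eq_one hss') hne
  · exact h1

theorem hasSSSD_iff (hn : 2 ≤ n) (hκ : shortSign S ^ n * longSign S ^ (n - 1) = -1)
    {u v : Fin n} {l : ℕ} : HasSSSD S u v l ↔ IsSSSDLength n u v l := by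
  rw [hasSSSD_iff_normalize hS hund]
  constructor
  · rintro ⟨s, s', h, h', hne⟩
    obtain ⟨A, B, t, hl, ht, hB, hss'⟩ := exists_winding_pair hS hn h h'
    have ht0 : t ≠ 0 := by
      rintro rfl
      rw [pow_zero] at hss'
      exact hne (Int.eq_of_mul_eq_one hss')
    have hA : n ≤ A := (Nat.le_mul_of_pos_left n (Nat.pos_of_ne_zero ht0)).trans ht
    exact ⟨A, B, hl, hA, fun hu => hB hu (by omega)⟩
  · rintro ⟨A, B, hl, hA, hB⟩
    obtain ⟨a, rfl⟩ := Nat.exists_eq_add_of_le' hA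
    have hl' : l + u.val = v.val + a * (n - 1) + (B + 1 * (n - 1)) * n := by
      have : (a + n) * (n - 1) + B * n = a * (n - 1) + (B + 1 * (n - 1)) * n := by ring
      omega
    refine ⟨_, _, hasSignedWalk_of_winding hS hn hl (fun hu _ => hB hu),
      hasSignedWalk_of_winding hS hn hl' (fun _ _ => by omega), fun heq => ?_⟩
    have := pow_add_mul_mul_pow_mul_pow_mul_pow_add_mul
      (Int.isUnit_mul_self (isUnit_shortSign hS hn)) (Int.isUnit_mul_self (isUnit_longSign hS))
      a B n (n - 1) 1
    rw [one_mul, ← heq, pow_one, hκ, Int.isUnit_mul_self] at this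
    · exact absurd this (by decide)
    · exact ((isUnit_shortSign hS hn).pow _).mul ((isUnit_longSign hS).pow _)

end SSSD

theorem isSSSDLength_of_forall_ne {n k x v : ℕ} (hk : 1 ≤ k) (hkn : k ≤ n) (hx : x < n)
    (hv : v < n) (h : ∀ i < k - 1, x ≠ (v + (n - k) + i) % n) :
    IsSSSDLength n x v ((2 * n - k) * (n - 1) + 1) := by
  obtain ⟨c, rfl⟩ : ∃ c, n = k + c := ⟨n - k, by omega⟩
  have h2 : 2 * (k + c) - k = k + c + c := by omega
  have hc : k + c - k = c := by omega
  rw [h2]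
  rw [hc] at h
  rcases le_or_gt (v + c) x with hvx | hvx
  · have hlast : x = k + c - 1 ∧ v = 0 := by
      by_contra hne
      exact h (x - v - c) (by omega) (by rw [Nat.mod_eq_of_lt (by omega)]; omega)
    refine ⟨k + c + c, 1, ?_, by omega, fun _ => Nat.one_pos⟩
    rw [hlast.1, hlast.2]
    zify [show 1 ≤ k + c by omega]
    ring
  rcases le_or_gt v x with hvx' | hxv
  · obtain ⟨d, rfl⟩ : ∃ d, x = v + d := ⟨x - v, by omega⟩
    obtain ⟨r, rfl⟩ : ∃ r, c = d + 1 + r := ⟨c - d - 1, by omega⟩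
    refine ⟨k + d + 1 + r + r, d + 1, ?_, by omega, fun _ => Nat.succ_pos d⟩
    zify [show 1 ≤ k + (d + 1 + r) by omega]
    ring
  rcases eq_or_lt_of_le (show x + 1 ≤ v from hxv) with hxv | hxv
  · refine ⟨k + c + c, 0, ?_, by omega, fun _ => by omega⟩
    rw [← hxv]
    zify [show 1 ≤ k + c by omega]
    ring
  · have hwrap : x + (k + c) < v + c := by
      by_contra hne
      exact h (x + (k + c) - v - c) (by omega)
        (by rw [show v + c + (x + (k + c) - v - c) = x + (k + c) by omega, Nat.add_mod_right,
          Nat.mod_eq_of_lt hx])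
    obtain ⟨f, hf⟩ : ∃ f, x + (k + c) = v + f := ⟨x + (k + c) - v, by omega⟩
    obtain ⟨r, rfl⟩ : ∃ r, c = f + 1 + r := ⟨c - f - 1, by omega⟩
    refine ⟨k + f + 1 + r + r, f, ?_, by omega, fun _ => by omega⟩
    zify [show 1 ≤ k + (f + 1 + r) by omega] at hf ⊢
    linear_combination hf

theorem not_isSSSDLength_last {n x p : ℕ} (hx : x < n) (hp : p ≤ n * (n - 1)) :
    ¬ IsSSSDLength n x (n - 1) p := by
  rintro ⟨A, B, hl, hA, hB⟩
  have hA' := Nat.mul_le_mul_right (n - 1) hA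
  rcases Nat.eq_zero_or_pos B with rfl | hB'
  · have := hB (by omega)
    omega
  · have := Nat.le_mul_of_pos_left n hB'
    omega

theorem not_isSSSDLength_of_lt {n x j r : ℕ} (hx : x < n) (hjx : j < x) (hr : r < n - 1) :
    ¬ IsSSSDLength n x (r + 1) (n * (n - 1) + j * (n - 1) + r + 1) := by
  rintro ⟨A, B, hl, hA, hB⟩
  obtain ⟨m, rfl⟩ : ∃ m, n = m + 1 := ⟨n - 1, by omega⟩
  simp only [Nat.add_sub_cancel] at hl hB hr
  have hl' : (m + 1 + j) * m + x = (A + B) * m + B := by linarith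
  rcases lt_trichotomy (A + B) (m + 1 + j) with hQ | hQ | hQ
  · nlinarith
  · rw [hQ] at hl'
    omega
  · have := Nat.mul_le_mul_right m (show m + 1 + j + 1 ≤ A + B from hQ)
    have := hB (by nlinarith)
    nlinarith

section Counting

variable {n : ℕ} [NeZero n]

theorem exists_mem_isSSSDLength {k : ℕ} (hk : 1 ≤ k) (hkn : k ≤ n) {X : Finset (Fin n)}
    (hX : X.card = k) (v : Fin n) :
    ∃ x ∈ X, IsSSSDLength n x v ((2 * n - k) * (n - 1) + 1) := by
  by_contra! hbad
  have hsub : X ⊆ (Finset.range (k - 1)).image fun i => ((v.val + (n - k) + i : ℕ) : Fin n) := by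
    intro x hx
    by_contra hne
    refine hbad x hx (isSSSDLength_of_forall_ne hk hkn x.isLt v.isLt fun i hi hxi => hne ?_)
    exact Finset.mem_image.2 ⟨i, Finset.mem_range.2 hi, Fin.ext (by rw [Fin.val_natCast, hxi])⟩
  have := (Finset.card_le_card hsub).trans Finset.card_image_le
  rw [Finset.card_range] at this
  omega

theorem exists_forall_not_isSSSDLength (hn : 2 ≤ n) {k p : ℕ} (hkn : k ≤ n)
    (hp : p < (2 * n - k) * (n - 1) + 1) :
    ∃ v : Fin n, ∀ x : Fin n, n - k ≤ x.val → ¬ IsSSSDLength n x v p := by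
  rcases le_or_gt p (n * (n - 1)) with hp' | hp'
  · refine ⟨((n - 1 : ℕ) : Fin n), fun x _ => ?_⟩
    rw [val_natCast_sub_one]
    exact not_isSSSDLength_last x.isLt hp'
  · have hpos : 0 < n - 1 := by omega
    have hm : p - n * (n - 1) - 1 < (n - k) * (n - 1) := by
      have : (2 * n - k) * (n - 1) = n * (n - 1) + (n - k) * (n - 1) := by
        rw [← add_mul]; congr 1; omega
      omega
    set m := p - n * (n - 1) - 1
    have hj : m / (n - 1) < n - k := (Nat.div_lt_iff_lt_mul hpos).2 hm
    have hr : m % (n - 1) < n - 1 := Nat.mod_lt m hpos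
    have hmjr := Nat.div_add_mod' m (n - 1)
    refine ⟨((m % (n - 1) + 1 : ℕ) : Fin n), fun x hx => ?_⟩
    rw [Fin.val_cast_of_lt (by omega),
      show p = n * (n - 1) + m / (n - 1) * (n - 1) + m % (n - 1) + 1 by omega]
    exact not_isSSSDLength_of_lt x.isLt (by omega) hr

end Counting

end D1

theorem upperBase_D1_general {n : ℕ} (hn : 2 ≤ n) (k : ℕ) (hk1 : 1 ≤ k) (hkn : k ≤ n)
    (S : Fin n → Fin n → ℤ) (hsp : SignPattern S)
    (hund : ∀ u v, Underlying S u v ↔ D1 n u v)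
    (hnp : NonPowerful S) :
    upperBase S k = (2 * n - k) * (n - 1) + 1 := by
  have : NeZero n := ⟨by omega⟩
  have hS : ∀ ⦃u v⦄, D1 n u v → IsUnit (S u v) := fun u v h =>
    isUnit_of_signPattern hsp ((hund u v).2 h)
  have hκ := D1.shortSign_pow_mul_longSign_pow hS hund hn hnp
  refine upperBase_eq_of_forall (X₀ := Finset.Ici ⟨n - k, by omega⟩) (fun X hX v => ?_)
    (by simp only [Fin.card_Ici]; omega) fun p hp => ?_
  · obtain ⟨x, hx, hxv⟩ := D1.exists_mem_isSSSDLength hk1 hkn hX v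
    exact ⟨x, hx, (D1.hasSSSD_iff hS hund hn hκ).2 hxv⟩
  · obtain ⟨v, hv⟩ := D1.exists_forall_not_isSSSDLength hn hkn hp
    refine ⟨v, fun x hx hxv => hv x ?_ ((D1.hasSSSD_iff hS hund hn hκ).1 hxv)⟩
    exact Fin.le_def.1 (Finset.mem_Ici.1 hx)

/-- Theorem 3.1: if `S₁` is a primitive non-powerful signed digraph with underlying
digraph `D₁`, then `L(S₁,k) = (2n-k)(n-1) + 1`. -/
theorem upperBase_D1 {n : ℕ} (hn : 2 ≤ n) (k : ℕ) (hk1 : 1 ≤ k) (hkn : k ≤ n)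
    (S : Fin n → Fin n → ℤ) (hsp : SignPattern S)
    (hund : ∀ u v, Underlying S u v ↔ D1 n u v)
    (hprim : Primitive (Underlying S)) (hnp : NonPowerful S) :
    upperBase S k = (2 * n - k) * (n - 1) + 1 :=
  upperBase_D1_general hn k hk1 hkn S hsp hund hnp
end

section
/- Let n ≥ 2, 1 ≤ k ≤ n, and let S₂ be a primitive non-powerful signed digraph whose underlying digraph is D₂ (the digraph on {1,...,n} with arcs (i,i+1) for 1 ≤ i ≤ n-1, (n,1), (n-1,1), and (n,2)). If the two cycles of length n-1 of S₂ have different signs, then L(S₂,k) ≤ (n-k+1)(n-1) + 2. -/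
/-!
Write the vertices of `D₂` as `Fin n` with arithmetic mod `n`; the arcs are `u → u + 1` and the
chords `-2 → 0`, `-1 → 1`. An `(n-1)`-cycle misses one vertex, and that vertex must be `0` or
`-1` (any other `m` has `m - 1` in the cycle with `m` as its only out-neighbour). So the two
`(n-1)`-cycles share the path `1 → ⋯ → -2` and close it up through `-2 → 0 → 1` resp.
`-2 → -1 → 1`; if these two 2-walks had the same sign, so would the two cycles.

For `X` with `|X| = k` and a target `v`, go from `x ∈ X` around the Hamiltonian cycle to `-2`,
wind `s` times around the `(n-1)`-cycle and `t` times around the `n`-cycle there, take either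
2-walk to `1`, and go around to `v`. The lengths `s (n-1) + t n` fill every interval
`[j (n-1), j n]`, and a pigeonhole count over the `k` distances from `X` to `-2` finds an `x` for
which the total length is exactly `(n-k+1)(n-1) + 2`.
-/

open Finset

section Walks

variable {n : ℕ} {A : Fin n → Fin n → Prop} {S : Fin n → Fin n → ℤ}
  {f g : ℕ → Fin n} {u v w : Fin n} {l m : ℕ}

def appendSeq (f g : ℕ → Fin n) (l : ℕ) : ℕ → Fin n :=
  fun i => if i ≤ l then f i else g (i - l)

lemma appendSeq_of_le {i : ℕ} (hi : i ≤ l) : appendSeq f g l i = f i :=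
  if_pos hi

lemma appendSeq_add (h : f l = g 0) (i : ℕ) : appendSeq f g l (l + i) = g i := by
  unfold appendSeq
  split_ifs with hi
  · obtain rfl : i = 0 := by omega
    simpa using h
  · simp

lemma IsWalkSeq.append (hf : IsWalkSeq A f u v l) (hg : IsWalkSeq A g v w m) :
    IsWalkSeq A (appendSeq f g l) u w (l + m) := by
  have hfg : f l = g 0 := hf.2.1.trans hg.1.symm
  refine ⟨(appendSeq_of_le l.zero_le).trans hf.1, (appendSeq_add hfg m).trans hg.2.1, ?_⟩
  intro i hi
  rcases lt_or_ge i l with hil | hli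
  · rw [appendSeq_of_le hil.le, appendSeq_of_le hil]
    exact hf.2.2 i hil
  · obtain ⟨j, rfl⟩ := Nat.exists_eq_add_of_le hli
    rw [appendSeq_add hfg, add_assoc, appendSeq_add hfg]
    exact hg.2.2 j (by omega)

lemma walkSign_appendSeq (h : f l = g 0) :
    walkSign S (appendSeq f g l) (l + m) = walkSign S f l * walkSign S g m := by
  unfold walkSign
  rw [prod_range_add]
  congr 1
  · refine prod_congr rfl fun i hi => ?_
    have hil := mem_range.1 hi
    rw [appendSeq_of_le hil.le, appendSeq_of_le hil]
  · refine prod_congr rfl fun i _ => ?_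
    rw [appendSeq_add h, add_assoc, appendSeq_add h]

lemma walkSign_ne_zero (hf : IsWalkSeq (Underlying S) f u v l) : walkSign S f l ≠ 0 :=
  prod_ne_zero_iff.2 fun i hi => hf.2.2 i (mem_range.1 hi)

lemma HasWalk.trans (h₁ : HasWalk A u v l) (h₂ : HasWalk A v w m) : HasWalk A u w (l + m) := by
  obtain ⟨f, hf⟩ : ∃ f, IsWalkSeq A f u v l := h₁
  obtain ⟨g, hg⟩ : ∃ g, IsWalkSeq A g v w m := h₂
  exact ⟨_, hf.append hg⟩

lemma HasWalk.mono {B : Fin n → Fin n → Prop} (hAB : ∀ u v, A u v → B u v)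
    (h : HasWalk A u v l) : HasWalk B u v l := by
  obtain ⟨f, hf0, hfl, hf⟩ := h
  exact ⟨f, hf0, hfl, fun i hi => hAB _ _ (hf i hi)⟩

lemma hasWalk_one (h : A u v) : HasWalk A u v 1 :=
  ⟨fun i => if i = 0 then u else v, rfl, rfl, fun i hi => by
    obtain rfl : i = 0 := by omega
    exact h⟩

lemma hasWalk_zero (u : Fin n) : HasWalk A u u 0 :=
  ⟨fun _ => u, rfl, rfl, fun _ hi => absurd hi (Nat.not_lt_zero _)⟩

lemma HasWalk.mul_left (h : HasWalk A u u l) (m : ℕ) : HasWalk A u u (m * l) := by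
  induction m with
  | zero => simpa using hasWalk_zero u
  | succ m ih => simpa [add_mul] using ih.trans h

lemma HasSSSD.append_hasWalk (h : HasSSSD S u v l) (hw : HasWalk (Underlying S) v w m) :
    HasSSSD S u w (l + m) := by
  obtain ⟨f, g, hf, hg, hne⟩ := h
  obtain ⟨c, hc⟩ : ∃ c, IsWalkSeq (Underlying S) c v w m := hw
  refine ⟨_, _, hf.append hc, hg.append hc, ?_⟩
  rw [walkSign_appendSeq (hf.2.1.trans hc.1.symm), walkSign_appendSeq (hg.2.1.trans hc.1.symm)]
  exact fun heq => hne (mul_right_cancel₀ (walkSign_ne_zero hc) heq)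

lemma HasWalk.append_hasSSSD (hw : HasWalk (Underlying S) u v m) (h : HasSSSD S v w l) :
    HasSSSD S u w (m + l) := by
  obtain ⟨c, hc⟩ : ∃ c, IsWalkSeq (Underlying S) c u v m := hw
  obtain ⟨f, g, hf, hg, hne⟩ := h
  refine ⟨_, _, hc.append hf, hc.append hg, ?_⟩
  rw [walkSign_appendSeq (hc.2.1.trans hf.1.symm), walkSign_appendSeq (hc.2.1.trans hg.1.symm)]
  exact fun heq => hne (mul_left_cancel₀ (walkSign_ne_zero hc) heq)

lemma hasSSSD_two {a b c d : Fin n} (hab : S a b ≠ 0) (hbd : S b d ≠ 0) (hac : S a c ≠ 0)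
    (hcd : S c d ≠ 0) (hne : S a b * S b d ≠ S a c * S c d) : HasSSSD S a d 2 := by
  have path : ∀ x, S a x ≠ 0 → S x d ≠ 0 →
      IsWalkSeq (Underlying S) (fun i => if i = 0 then a else if i = 1 then x else d) a d 2 ∧
        walkSign S (fun i => if i = 0 then a else if i = 1 then x else d) 2 = S a x * S x d := by
    intro x hax hxd
    refine ⟨⟨rfl, rfl, fun i hi => ?_⟩, by simp [walkSign, prod_range_succ]⟩
    interval_cases i
    exacts [hax, hxd]
  obtain ⟨hb, hb'⟩ := path b hab hbd
  obtain ⟨hc, hc'⟩ := path c hac hcd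
  exact ⟨_, _, hb, hc, by rwa [hb', hc']⟩

end Walks

section Rotation

open Fin.NatCast

variable {n : ℕ} [NeZero n] {A : Fin n → Fin n → Prop}

lemma hasWalk_add_natCast (hA : ∀ u, A u (u + 1)) (x : Fin n) (l : ℕ) :
    HasWalk A x (x + l) l :=
  ⟨fun i => x + i, by simp, rfl, fun i _ => by simpa [add_assoc] using hA (x + i)⟩

lemma hasWalk_val_sub (hA : ∀ u, A u (u + 1)) (x y : Fin n) : HasWalk A x y (y - x).val := by
  simpa using hasWalk_add_natCast hA x (y - x).val

lemma hasWalk_self_card (hA : ∀ u, A u (u + 1)) (x : Fin n) : HasWalk A x x n := by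
  simpa using hasWalk_add_natCast hA x n

end Rotation

section Cycles

variable {n p : ℕ} {A : Fin n → Fin n → Prop} {f : ℕ → Fin n}

lemma IsCycleSeq.mem_image (hf : IsCycleSeq A f p) {i : ℕ} (hi : i ≤ p) :
    f i ∈ (range p).image f := by
  rcases hi.lt_or_eq with hi | rfl
  · exact mem_image_of_mem f (mem_range.2 hi)
  · rw [hf.2.1]
    exact mem_image_of_mem f (mem_range.2 hf.1)

lemma IsCycleSeq.injOn (hf : IsCycleSeq A f p) : Set.InjOn f (range p) :=
  fun i hi j hj => hf.2.2.2 i (mem_range.1 hi) j (mem_range.1 hj)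

lemma IsCycleSeq.walkSign_eq_prod (hf : IsCycleSeq A f p) (S : Fin n → Fin n → ℤ)
    {σ : Fin n → Fin n}
    (hσ : ∀ u v, A u v → u ∈ (range p).image f → v ∈ (range p).image f → v = σ u) :
    walkSign S f p = ∏ v ∈ (range p).image f, S v (σ v) := by
  rw [prod_image hf.injOn]
  refine prod_congr rfl fun i hi => ?_
  have hi := mem_range.1 hi
  rw [hσ _ _ (hf.2.2.1 i hi) (hf.mem_image hi.le) (hf.mem_image hi)]

lemma IsCycleSeq.exists_image_eq_compl (hf : IsCycleSeq A f (n - 1)) :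
    ∃ m, (range (n - 1)).image f = {m}ᶜ := by
  have hcard : ((range (n - 1)).image f)ᶜ.card = 1 := by
    rw [card_compl, card_image_of_injOn hf.injOn, card_range,
      Fintype.card_fin]
    have := hf.1
    omega
  obtain ⟨m, hm⟩ := card_eq_one.1 hcard
  exact ⟨m, by rw [← hm, compl_compl]⟩

end Cycles

lemma exists_add_mul_add_mul_eq {N k e a : ℕ} (he : e < N) (ha : a < N)
    (hk : k - 1 ≤ (e + a) % N) :
    ∃ s t, e + a + s * (N - 1) + t * N = (N - k + 1) * (N - 1) := by
  rcases lt_or_ge (e + a) N with hlt | hge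
  · rw [Nat.mod_eq_of_lt hlt] at hk
    refine ⟨e + a + 1 - k, N - 1 - (e + a), ?_⟩
    zify [show k ≤ e + a + 1 by omega, show e + a ≤ N - 1 by omega, show 1 ≤ N by omega,
      show k ≤ N by omega]
    ring
  · rw [Nat.mod_eq_sub_mod hge, Nat.mod_eq_of_lt (by omega)] at hk
    refine ⟨e + a + 1 - k - N, 2 * N - 2 - (e + a), ?_⟩
    zify [show k ≤ e + a + 1 by omega, show N ≤ e + a + 1 - k by omega,
      show e + a ≤ 2 * N - 2 by omega, show 2 ≤ 2 * N by omega, show 1 ≤ N by omega,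
      show k ≤ N by omega]
    ring

lemma Finset.exists_card_sub_one_le_val {n : ℕ} {X : Finset (Fin n)} (hX : X.Nonempty)
    {g : Fin n → Fin n} (hg : Function.Injective g) : ∃ x ∈ X, X.card - 1 ≤ (g x).val := by
  by_contra! h
  have := card_le_card_of_injOn (fun x => (g x).val) (t := range (X.card - 1))
    (fun x hx => mem_range.2 (h x hx)) fun x _ y _ hxy => hg (Fin.ext hxy)
  rw [card_range] at this
  have := hX.card_pos
  omega

lemma Finset.prod_ite_eq_mul_prod_erase {α β M : Type*} [DecidableEq α] [CommMonoid M]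
    {s : Finset α} {a : α} (ha : a ∈ s) (F : α → β → M) (b : β) (g : α → β) :
    ∏ v ∈ s, F v (if v = a then b else g v) = F a b * ∏ v ∈ s.erase a, F v (g v) := by
  rw [← mul_prod_erase s _ ha, if_pos rfl]
  congr 1
  exact prod_congr rfl fun v hv => by rw [if_neg (ne_of_mem_erase hv)]

namespace D2

variable {n : ℕ}

lemma val_neg_two : ((-2 : Fin (n + 2)) : ℕ) = n := by
  have : (-2 : Fin (n + 2)) = ⟨n, by omega⟩ := by
    rw [neg_eq_iff_add_eq_zero]
    ext
    simp [Fin.val_add, add_comm]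
  simp [this]

lemma neg_two_add_one : (-2 : Fin (n + 2)) + 1 = -1 := by
  ext
  simp [Fin.val_add, val_neg_two, Fin.coe_neg_one]

/-- With vertex `i` of the paper at index `i - 1`, the vertices `n - 1, n, 1, 2` of the paper
are `-2, -1, 0, 1`. -/
lemma adj_iff {u v : Fin (n + 2)} :
    D2 (n + 2) u v ↔ v = u + 1 ∨ (u = -2 ∧ v = 0) ∨ (u = -1 ∧ v = 1) := by
  simp only [D2, D1, Fin.ext_iff, Fin.val_add, val_neg_two, Fin.coe_neg_one, Fin.val_zero,
    Fin.val_one]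
  rcases Nat.lt_succ_iff_lt_or_eq.1 u.isLt with h | h
  · rw [Nat.mod_eq_of_lt (by omega)]; omega
  · rw [h, Nat.mod_self]; omega

lemma adj_add_one (u : Fin (n + 2)) : D2 (n + 2) u (u + 1) :=
  adj_iff.2 (Or.inl rfl)

variable {f : ℕ → Fin (n + 2)} {S : Fin (n + 2) → Fin (n + 2) → ℤ}

lemma compl_eq_zero_or_neg_one {m : Fin (n + 2)} (hf : IsCycleSeq (D2 (n + 2)) f (n + 1))
    (hV : (range (n + 1)).image f = {m}ᶜ) : m = 0 ∨ m = -1 := by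
  by_contra! hm
  have hpred : m - 1 ∈ (range (n + 1)).image f := by
    rw [hV, mem_compl, mem_singleton, sub_eq_self]
    exact one_ne_zero
  obtain ⟨i, hi, hfi⟩ := mem_image.1 hpred
  have hi := mem_range.1 hi
  have hnext : f (i + 1) ≠ m := by
    simpa [hV] using hf.mem_image (Nat.succ_le_of_lt hi)
  rcases adj_iff.1 (hfi ▸ hf.2.2.1 i hi) with h | ⟨h, -⟩ | ⟨h, -⟩
  · exact hnext (by rw [h, sub_add_cancel])
  · exact hm.2 (by rw [sub_eq_iff_eq_add.1 h, neg_two_add_one])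
  · exact hm.1 (by simpa [sub_eq_iff_eq_add] using h)

lemma walkSign_cycle (S : Fin (n + 2) → Fin (n + 2) → ℤ)
    (hf : IsCycleSeq (D2 (n + 2)) f (n + 1)) :
    walkSign S f (n + 1) = ∏ v ∈ {-1}ᶜ, S v (if v = -2 then 0 else v + 1) ∨
      walkSign S f (n + 1) = ∏ v ∈ {0}ᶜ, S v (if v = -1 then 1 else v + 1) := by
  obtain ⟨m, hV⟩ : ∃ m, (range (n + 1)).image f = {m}ᶜ := hf.exists_image_eq_compl
  rcases compl_eq_zero_or_neg_one hf hV with rfl | rfl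
  · refine Or.inr ((hf.walkSign_eq_prod S fun u v huv hu hv => ?_).trans (by rw [hV]))
    simp only [hV, mem_compl, mem_singleton] at hu hv
    rcases adj_iff.1 huv with rfl | ⟨-, rfl⟩ | ⟨rfl, rfl⟩
    · rw [if_neg]
      rintro rfl
      exact hv (neg_add_cancel 1)
    · exact absurd rfl hv
    · exact (if_pos rfl).symm
  · refine Or.inl ((hf.walkSign_eq_prod S fun u v huv hu hv => ?_).trans (by rw [hV]))
    simp only [hV, mem_compl, mem_singleton] at hu hv
    rcases adj_iff.1 huv with rfl | ⟨rfl, rfl⟩ | ⟨rfl, -⟩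
    · rw [if_neg]
      rintro rfl
      exact hv neg_two_add_one
    · exact (if_pos rfl).symm
    · exact absurd rfl hu

lemma neg_two_ne_neg_one : (-2 : Fin (n + 2)) ≠ -1 := by
  intro h
  simpa [val_neg_two, Fin.coe_neg_one] using congrArg Fin.val h

lemma cycleSigns_eq_of_twoWalkSigns_eq
    (hund : ∀ u v, Underlying S u v ↔ D2 (n + 2) u v)
    (heq : S (-2) 0 * S 0 1 = S (-2) (-1) * S (-1) 1) :
    ∏ v ∈ {-1}ᶜ, S v (if v = -2 then 0 else v + 1) =
      ∏ v ∈ {0}ᶜ, S v (if v = -1 then 1 else v + 1) := by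
  have h₁ : (-2 : Fin (n + 2)) ∈ ({-1}ᶜ : Finset _) := by simpa using neg_two_ne_neg_one
  have h₂ : (-1 : Fin (n + 2)) ∈ ({0}ᶜ : Finset _) := by simp
  have h₃ : (0 : Fin (n + 2)) ∈ ({-1}ᶜ : Finset _) := by simp
  -- compare both cycle products with the Hamiltonian path `0 → ⋯ → -1`
  have hQ₁ := mul_prod_erase _ (fun v => S v (v + 1)) h₁
  have hQ₂ := mul_prod_erase _ (fun v => S v (v + 1)) h₃
  rw [neg_two_add_one] at hQ₁
  have hE : ({-1}ᶜ : Finset (Fin (n + 2))).erase 0 = ({0}ᶜ : Finset _).erase (-1) := by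
    simp only [compl_singleton, erase_right_comm]
  rw [zero_add, hE] at hQ₂
  have hc : S (-2) 0 * S 0 1 ≠ 0 :=
    mul_ne_zero ((hund _ _).2 (adj_iff.2 (by simp))) ((hund _ _).2 (adj_iff.2 (by simp)))
  refine mul_right_cancel₀ hc ?_
  rw [Finset.prod_ite_eq_mul_prod_erase h₁, Finset.prod_ite_eq_mul_prod_erase h₂]
  linear_combination (S (-2) 0 * ∏ v ∈ ({-1}ᶜ : Finset _).erase (-2), S v (v + 1)) * heq
    + S (-2) 0 * S (-1) 1 * hQ₁ - S (-2) 0 * S (-1) 1 * hQ₂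

lemma twoWalkSigns_ne_of_cycleSigns_ne (hund : ∀ u v, Underlying S u v ↔ D2 (n + 2) u v)
    (hdiff : ∃ f g : ℕ → Fin (n + 2), IsCycleSeq (D2 (n + 2)) f (n + 1) ∧
      IsCycleSeq (D2 (n + 2)) g (n + 1) ∧ walkSign S f (n + 1) ≠ walkSign S g (n + 1)) :
    S (-2) 0 * S 0 1 ≠ S (-2) (-1) * S (-1) 1 := by
  obtain ⟨f, g, hf, hg, hne⟩ := hdiff
  intro heq
  have hsign : ∀ f, IsCycleSeq (D2 (n + 2)) f (n + 1) →
      walkSign S f (n + 1) = ∏ v ∈ {-1}ᶜ, S v (if v = -2 then 0 else v + 1) := fun f hf =>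
    (walkSign_cycle S hf).elim id fun h => h.trans (cycleSigns_eq_of_twoWalkSigns_eq hund heq).symm
  exact hne ((hsign f hf).trans (hsign g hg).symm)

lemma hasSSSD_neg_two_one (hund : ∀ u v, Underlying S u v ↔ D2 (n + 2) u v)
    (hne : S (-2) 0 * S 0 1 ≠ S (-2) (-1) * S (-1) 1) : HasSSSD S (-2) 1 2 :=
  hasSSSD_two ((hund _ _).2 (adj_iff.2 (Or.inr (Or.inl ⟨rfl, rfl⟩))))
    ((hund _ _).2 (adj_iff.2 (Or.inl (zero_add 1).symm)))
    ((hund _ _).2 (adj_iff.2 (Or.inl neg_two_add_one.symm)))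
    ((hund _ _).2 (adj_iff.2 (Or.inr (Or.inr ⟨rfl, rfl⟩)))) hne

open Fin.NatCast in
lemma hasWalk_neg_two_loops (s t : ℕ) :
    HasWalk (D2 (n + 2)) (-2) (-2) (s * (n + 1) + t * (n + 2)) := by
  have hcast : (0 : Fin (n + 2)) + (n : ℕ) = -2 := by
    rw [zero_add, eq_neg_iff_add_eq_zero]
    exact_mod_cast Fin.natCast_self (n + 2)
  have hshort : HasWalk (D2 (n + 2)) (-2) (-2) (1 + n) :=
    (hasWalk_one (adj_iff.2 (Or.inr (Or.inl ⟨rfl, rfl⟩)))).trans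
      (hcast ▸ hasWalk_add_natCast adj_add_one 0 n)
  exact ((add_comm 1 n ▸ hshort).mul_left s).trans
    ((hasWalk_self_card adj_add_one (-2)).mul_left t)

lemma exists_hasSSSD (hund : ∀ u v, Underlying S u v ↔ D2 (n + 2) u v)
    (hne : S (-2) 0 * S 0 1 ≠ S (-2) (-1) * S (-1) 1) {X : Finset (Fin (n + 2))}
    (hX : X.Nonempty) (v : Fin (n + 2)) :
    ∃ x ∈ X, HasSSSD S x v ((n + 2 - X.card + 1) * (n + 1) + 2) := by
  have hmono : ∀ u w, D2 (n + 2) u w → Underlying S u w := fun u w => (hund u w).2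
  -- the value at `x` is the distance `x → -2` plus the distance `1 → v`, reduced mod `n + 2`
  obtain ⟨x, hxX, hx⟩ := X.exists_card_sub_one_le_val hX (g := fun x => (-2 - x) + (v - 1))
    fun x y h => by simpa using h
  rw [Fin.val_add] at hx
  obtain ⟨s, t, hst⟩ := exists_add_mul_add_mul_eq (Fin.is_lt _) (Fin.is_lt _) hx
  have hto := ((hasWalk_val_sub adj_add_one x (-2)).trans (hasWalk_neg_two_loops s t)).mono hmono
  have hfrom := (hasWalk_val_sub adj_add_one 1 v).mono hmono
  refine ⟨x, hxX, ?_⟩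
  convert (hto.append_hasSSSD (hasSSSD_neg_two_one hund hne)).append_hasWalk hfrom using 1
  rw [show n + 2 - 1 = n + 1 from rfl] at hst
  linarith

end D2

theorem upperBase_D2_diff_signs_general {n : ℕ} (hn : 2 ≤ n) (k : ℕ) (hk1 : 1 ≤ k)
    (S : Fin n → Fin n → ℤ)
    (hund : ∀ u v, Underlying S u v ↔ D2 n u v)
    (hdiff : ∃ f g : ℕ → Fin n, IsCycleSeq (D2 n) f (n - 1) ∧
      IsCycleSeq (D2 n) g (n - 1) ∧ walkSign S f (n - 1) ≠ walkSign S g (n - 1)) :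
    upperBase S k ≤ (n - k + 1) * (n - 1) + 2 := by
  obtain ⟨n, rfl⟩ := Nat.exists_eq_add_of_le' hn
  have hne := D2.twoWalkSigns_ne_of_cycleSigns_ne hund hdiff
  refine csSup_le' ?_
  rintro _ ⟨X, rfl, rfl⟩
  exact Nat.sInf_le fun v => D2.exists_hasSSSD hund hne (card_pos.1 (by omega)) v

/-- Theorem 3.2(1): if the two cycles of length `n-1` of `S₂` have different signs,
then `L(S₂,k) ≤ (n-k+1)(n-1) + 2`. -/
theorem upperBase_D2_diff_signs {n : ℕ} (hn : 2 ≤ n) (k : ℕ) (hk1 : 1 ≤ k) (hkn : k ≤ n)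
    (S : Fin n → Fin n → ℤ) (hsp : SignPattern S)
    (hund : ∀ u v, Underlying S u v ↔ D2 n u v)
    (hprim : Primitive (Underlying S)) (hnp : NonPowerful S)
    (hdiff : ∃ f g : ℕ → Fin n, IsCycleSeq (D2 n) f (n - 1) ∧
      IsCycleSeq (D2 n) g (n - 1) ∧ walkSign S f (n - 1) ≠ walkSign S g (n - 1)) :
    upperBase S k ≤ (n - k + 1) * (n - 1) + 2 :=
  upperBase_D2_diff_signs_general hn k hk1 S hund hdiff
end

section
/- Let n ≥ 2, 1 ≤ k ≤ n, and let S₂ be a primitive non-powerful signed digraph whose underlying digraph is D₂. If the two cycles of length n-1 of S₂ have the same sign, then L(S₂,k) = (2n-k)(n-1). -/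
/-!
Vertices are indexed `0, …, n-1`. Switching `S` by the signs `τ v = gauge S v` of the paths
`0 → 1 → ⋯ → v` makes every arc positive except `n-1 → 0`, which gets the sign
`s = hamiltonianSign S` of the Hamiltonian cycle, and `n-2 → 0`, `n-1 → 1`, which both get the
common sign `p = shortCycleSign S` of the two `(n-1)`-cycles. So a walk `u → v` of length `l`
using the first arc `X` times and the other two `Y` times in total satisfies
`l + u = n X + (n-1) Y + v` and has sign `τ u τ v s^X p^Y`. Since `n` and `n-1` are coprime, two
types `(X, Y)` of the same length differ by a multiple of `(n-1, -n)`; hence `S` is non-powerful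
iff `s^(n-1) ≠ p^n`, and SSSD walks of length `l` from `u` to `v` exist essentially iff
`l + u = n A + (n-1) (B + n) + v` for some `A, B ≥ 0`.

Given a `k`-set `X` and a vertex `v`, some `x ∈ X` has `(x - v) mod n ≤ n - k`, which yields
such a representation for `l = (2n-k)(n-1)`. Conversely, for `X = {0} ∪ {x | x > n - k}` and
`q < (2n-k)(n-1)`, no vertex of `X` reaches `v = (q mod (n-1)) + 1` by SSSD walks of length `q`.
-/

section SignedWalks

variable {n : ℕ} {S : Fin n → Fin n → ℤ}

inductive SignedWalk (S : Fin n → Fin n → ℤ) (u : Fin n) : Fin n → ℕ → ℤ → Prop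
  | nil : SignedWalk S u u 0 1
  | snoc {a b : Fin n} {l : ℕ} {σ : ℤ} :
      SignedWalk S u a l σ → S a b ≠ 0 → SignedWalk S u b (l + 1) (σ * S a b)

namespace SignedWalk

theorem append {u w v : Fin n} {l₁ l₂ : ℕ} {σ₁ σ₂ : ℤ} (h₁ : SignedWalk S u w l₁ σ₁)
    (h₂ : SignedWalk S w v l₂ σ₂) : SignedWalk S u v (l₁ + l₂) (σ₁ * σ₂) := by
  induction h₂ with
  | nil => simpa using h₁
  | snoc _ hab ih => rw [← mul_assoc]; exact ih.snoc hab

theorem arc {u v : Fin n} (h : S u v ≠ 0) : SignedWalk S u v 1 (S u v) := by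
  simpa using nil.snoc h

end SignedWalk

theorem walkSign_zero (f : ℕ → Fin n) : walkSign S f 0 = 1 := Finset.prod_range_zero _

theorem walkSign_succ (f : ℕ → Fin n) (l : ℕ) :
    walkSign S f (l + 1) = walkSign S f l * S (f l) (f (l + 1)) :=
  Finset.prod_range_succ _ _

theorem walkSign_congr {f g : ℕ → Fin n} {l : ℕ} (h : ∀ i ≤ l, f i = g i) :
    walkSign S f l = walkSign S g l :=
  Finset.prod_congr rfl fun i hi => by
    rw [Finset.mem_range] at hi; rw [h i hi.le, h (i + 1) hi]

theorem walkSign_of_pos (f : ℕ → Fin n) {l : ℕ} (hl : 0 < l) :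
    walkSign S f l = walkSign S f (l - 1) * S (f (l - 1)) (f l) := by
  obtain ⟨m, rfl⟩ := Nat.exists_eq_add_of_lt hl
  simpa using walkSign_succ f m

theorem walkSign_succ' (f : ℕ → Fin n) (l : ℕ) :
    walkSign S f (l + 1) = walkSign S (fun i => f (i + 1)) l * S (f 0) (f 1) :=
  Finset.prod_range_succ' _ _

theorem signedWalk_iff {u v : Fin n} {l : ℕ} {σ : ℤ} :
    SignedWalk S u v l σ ↔ ∃ f, IsWalkSeq (Underlying S) f u v l ∧ walkSign S f l = σ := by
  constructor
  · intro h
    induction h with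
    | nil => exact ⟨fun _ => u, ⟨rfl, rfl, fun i hi => absurd hi (Nat.not_lt_zero i)⟩,
        walkSign_zero _⟩
    | @snoc a b l σ _ hab ih =>
      obtain ⟨f, ⟨hf0, hfl, hf⟩, rfl⟩ := ih
      let g : ℕ → Fin n := fun i => if i ≤ l then f i else b
      have hg : ∀ i ≤ l, g i = f i := fun i hi => if_pos hi
      have hgl : g (l + 1) = b := if_neg (by omega)
      refine ⟨g, ⟨(hg 0 l.zero_le).trans hf0, hgl, fun i hi => ?_⟩, ?_⟩
      · rcases Nat.lt_succ_iff_lt_or_eq.1 hi with hi | rfl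
        · rw [hg i hi.le, hg (i + 1) hi]; exact hf i hi
        · rw [hg i le_rfl, hgl, hfl]; exact hab
      · rw [walkSign_succ, hgl, hg l le_rfl, hfl, walkSign_congr hg]
  · rintro ⟨f, hf, rfl⟩
    induction l generalizing v with
    | zero =>
      obtain ⟨hf0, hfv, -⟩ := hf
      rw [walkSign_zero, ← hfv, hf0]; exact .nil
    | succ l ih =>
      obtain ⟨hf0, rfl, hf⟩ := hf
      rw [walkSign_succ]
      exact (ih ⟨hf0, rfl, fun i hi => hf i (by omega)⟩).snoc (hf l (by omega))

theorem hasSSSD_iff {u v : Fin n} {l : ℕ} :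
    HasSSSD S u v l ↔ ∃ σ σ', SignedWalk S u v l σ ∧ SignedWalk S u v l σ' ∧ σ ≠ σ' := by
  simp only [HasSSSD, signedWalk_iff]
  constructor
  · rintro ⟨f, g, hf, hg, hne⟩
    exact ⟨_, _, ⟨f, hf, rfl⟩, ⟨g, hg, rfl⟩, hne⟩
  · rintro ⟨_, _, ⟨f, hf, rfl⟩, ⟨g, hg, rfl⟩, hne⟩
    exact ⟨f, g, hf, hg, hne⟩

theorem SignPattern.mul_self_eq_one (hS : SignPattern S) {u v : Fin n} (h : S u v ≠ 0) :
    S u v * S u v = 1 := by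
  rcases hS u v with h' | h' | h' <;> simp_all

theorem SignPattern.walkSign_mul_self (hS : SignPattern S) {f : ℕ → Fin n} {l : ℕ}
    (hf : ∀ i < l, S (f i) (f (i + 1)) ≠ 0) : walkSign S f l * walkSign S f l = 1 := by
  rw [walkSign, ← Finset.prod_mul_distrib]
  exact Finset.prod_eq_one fun i hi => hS.mul_self_eq_one (hf i (Finset.mem_range.1 hi))

end SignedWalks

theorem exists_eq_add_mul_of_mul_add_mul_eq {a b x₁ y₁ x₂ y₂ : ℕ} (hab : a.Coprime b)
    (hb : 0 < b) (h : a * x₁ + b * y₁ = a * x₂ + b * y₂) (hx : x₁ ≤ x₂) :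
    ∃ t, x₂ = x₁ + b * t ∧ y₁ = y₂ + a * t := by
  obtain ⟨d, rfl⟩ := Nat.exists_eq_add_of_le hx
  have hy : b * y₁ = b * y₂ + a * d := by linarith
  obtain ⟨t, rfl⟩ : b ∣ d := hab.symm.dvd_of_dvd_mul_left
    ((Nat.dvd_add_right (dvd_mul_right b y₂)).1 (hy ▸ dvd_mul_right b y₁))
  refine ⟨t, rfl, Nat.eq_of_mul_eq_mul_left hb ?_⟩
  rw [hy]; ring

theorem pow_mul_pow_eq_of_pow_eq {M : Type*} [CommMonoid M] {s p : M} {a b : ℕ}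
    (hab : a.Coprime b) (hb : 0 < b) (hsp : s ^ b = p ^ a) {x₁ y₁ x₂ y₂ : ℕ}
    (h : a * x₁ + b * y₁ = a * x₂ + b * y₂) : s ^ x₁ * p ^ y₁ = s ^ x₂ * p ^ y₂ := by
  wlog hx : x₁ ≤ x₂ generalizing x₁ y₁ x₂ y₂
  · exact (this h.symm (le_of_not_ge hx)).symm
  obtain ⟨t, rfl, rfl⟩ := exists_eq_add_mul_of_mul_add_mul_eq hab hb h hx
  rw [pow_add, pow_add, pow_mul, pow_mul, hsp]
  ac_rfl

theorem exists_eq_mul_add_mul_add_of_ne {a b x₁ y₁ x₂ y₂ : ℕ} (hab : a.Coprime b) (hb : 0 < b)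
    (h : a * x₁ + b * y₁ = a * x₂ + b * y₂) (hne : (x₁, y₁) ≠ (x₂, y₂)) :
    ∃ x y, a * x₁ + b * y₁ = a * x + b * (y + a) := by
  wlog hx : x₁ ≤ x₂ generalizing x₁ y₁ x₂ y₂
  · rw [h]; exact this h.symm hne.symm (le_of_not_ge hx)
  obtain ⟨t, rfl, rfl⟩ := exists_eq_add_mul_of_mul_add_mul_eq hab hb h hx
  obtain _ | t := t
  · simp at hne
  · exact ⟨x₁, y₂ + a * t, by ring⟩

theorem Nat.coprime_self_sub_one {n : ℕ} (hn : 1 ≤ n) : n.Coprime (n - 1) :=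
  (Nat.coprime_self_sub_right hn).2 (Nat.coprime_one_right n)

theorem le_of_add_eq_mul_add_mul_add_mod {n k q x A B : ℕ} (hk : 1 ≤ k) (hxn : x < n)
    (hx : x = 0 ∨ n - k < x) (h : q + x = n * A + (n - 1) * (B + n) + (q % (n - 1) + 1)) :
    (2 * n - k) * (n - 1) ≤ q := by
  obtain ⟨d, rfl⟩ : ∃ d, n = d + 1 := ⟨n - 1, by omega⟩
  simp only [Nat.add_sub_cancel] at h ⊢
  rcases Nat.eq_zero_or_pos d with rfl | hd
  · simp at h; omega
  have hq := Nat.div_add_mod q d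
  have key : d * (q / d + 1) = d * (A + B + d + 1) + (A + 1 + d - x) := by
    ring_nf at h hq ⊢; omega
  -- modulo `d = n - 1` the equation leaves `d ∣ A + 1 + d - x`, which forces `A` to be large
  obtain ⟨t, ht⟩ : d ∣ A + 1 + d - x :=
    (Nat.dvd_add_right (dvd_mul_right d _)).1 (key ▸ dvd_mul_right d _)
  have hQ : q / d + 1 = A + B + d + 1 + t :=
    Nat.eq_of_mul_eq_mul_left hd (by rw [key, ht]; ring)
  have hbound : 2 * (d + 1) - k ≤ q / d := by
    rcases hx with rfl | hx
    · obtain _ | _ | t := t <;> simp only [mul_add, mul_zero, mul_one] at ht <;> omega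
    · obtain _ | t := t <;> simp only [mul_add, mul_zero, mul_one] at ht <;> omega
  calc (2 * (d + 1) - k) * d ≤ q / d * d := Nat.mul_le_mul_right d hbound
    _ ≤ q := Nat.div_mul_le_self q d

theorem Finset.exists_val_sub_add_card_le {n : ℕ} [NeZero n] {X : Finset (Fin n)}
    (hX : X.Nonempty) (v : Fin n) : ∃ x ∈ X, (x - v).val + X.card ≤ n := by
  by_contra! h
  have hcard : X.card ≤ n := by simpa using X.card_le_univ
  have hle := Finset.card_le_card_of_injOn (fun x => (x - v).val) (t := Finset.Ioo (n - X.card) n)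
    (fun x hx => Finset.mem_Ioo.2 ⟨by have := h x hx; dsimp only; omega, (x - v).isLt⟩)
    (fun x _ y _ hxy => sub_left_injective (Fin.ext hxy))
  rw [Nat.card_Ioo] at hle
  have := hX.card_pos
  omega

open Fin.NatCast in
theorem Fin.natCast_eq_of_val_eq {n : ℕ} [NeZero n] {v : Fin n} {m : ℕ} (h : v.val = m) :
    (m : Fin n) = v :=
  h ▸ Fin.cast_val_eq_self v

namespace D2

open Fin.NatCast

variable {n : ℕ} [NeZero n]

theorem natCast_succ {i : ℕ} (hi : i < n) : D2 n (i : Fin n) ((i + 1 : ℕ) : Fin n) := by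
  rcases Nat.lt_or_ge (i + 1) n with h | h
  · exact Or.inl (Or.inl (by rw [Fin.val_cast_of_lt h, Fin.val_cast_of_lt hi]))
  · refine Or.inl (Or.inr (Or.inl ⟨by rw [Fin.val_cast_of_lt hi]; omega, ?_⟩))
    rw [show i + 1 = n by omega, Fin.natCast_self, Fin.val_zero]

def cycleAvoidingLast : ℕ → Fin n := fun i => ((i % (n - 1) : ℕ) : Fin n)

def cycleAvoidingZero : ℕ → Fin n := fun i => if i = 0 then ((n - 1 : ℕ) : Fin n) else i

theorem isCycleSeq_cycleAvoidingLast (hn : 2 ≤ n) :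
    IsCycleSeq (D2 n) cycleAvoidingLast (n - 1) := by
  have val_eq : ∀ i < n - 1, (cycleAvoidingLast i : Fin n).val = i := fun i hi => by
    rw [cycleAvoidingLast, Nat.mod_eq_of_lt hi, Fin.val_cast_of_lt (by omega)]
  refine ⟨by omega, by simp [cycleAvoidingLast], fun i hi => ?_, fun i hi j hj hij => ?_⟩
  · rcases Nat.lt_or_ge (i + 1) (n - 1) with h | h
    · simp only [cycleAvoidingLast, Nat.mod_eq_of_lt hi, Nat.mod_eq_of_lt h]
      exact natCast_succ (by omega)
    · refine Or.inl (Or.inr (Or.inr ⟨by rw [val_eq i hi]; omega, ?_⟩))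
      simp [cycleAvoidingLast, show i + 1 = n - 1 by omega]
  · rw [← val_eq i hi, ← val_eq j hj, hij]

theorem isCycleSeq_cycleAvoidingZero (hn : 2 ≤ n) :
    IsCycleSeq (D2 n) cycleAvoidingZero (n - 1) := by
  have val_eq : ∀ i < n, (cycleAvoidingZero i : Fin n).val = if i = 0 then n - 1 else i :=
    fun i hi => by
      unfold cycleAvoidingZero; split_ifs <;> exact Fin.val_cast_of_lt (by omega)
  refine ⟨by omega, by simp [cycleAvoidingZero, show n - 1 ≠ 0 by omega], fun i hi => ?_,
    fun i hi j hj hij => ?_⟩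
  · rcases Nat.eq_zero_or_pos i with rfl | h
    · refine Or.inr ⟨by rw [val_eq 0 (by omega)]; rfl, ?_⟩
      rw [val_eq 1 (by omega)]; rfl
    · simp only [cycleAvoidingZero, if_neg h.ne', if_neg (Nat.succ_ne_zero i)]
      exact natCast_succ (by omega)
  · have := congrArg Fin.val hij
    rw [val_eq i (by omega), val_eq j (by omega)] at this
    split_ifs at this <;> omega

end D2

structure IsSignedD2 {n : ℕ} (S : Fin n → Fin n → ℤ) : Prop where
  two_le : 2 ≤ n
  signPattern : SignPattern S
  underlying_iff : ∀ u v, Underlying S u v ↔ D2 n u v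

def ShortCyclesSameSign {n : ℕ} (S : Fin n → Fin n → ℤ) : Prop :=
  ∀ f g : ℕ → Fin n, IsCycleSeq (D2 n) f (n - 1) → IsCycleSeq (D2 n) g (n - 1) →
    walkSign S f (n - 1) = walkSign S g (n - 1)

namespace IsSignedD2

open Fin.NatCast

variable {n : ℕ} [NeZero n] (S : Fin n → Fin n → ℤ)

def gauge (v : Fin n) : ℤ := walkSign S Nat.cast v

def hamiltonianSign : ℤ := walkSign S Nat.cast n

def shortCycleSign : ℤ := walkSign S D2.cycleAvoidingLast (n - 1)

variable {S}

theorem gauge_mul_self (hS : IsSignedD2 S) (v : Fin n) : gauge S v * gauge S v = 1 :=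
  hS.signPattern.walkSign_mul_self fun _ hi =>
    (hS.underlying_iff _ _).2 (D2.natCast_succ (hi.trans v.isLt))

theorem hamiltonianSign_mul_self (hS : IsSignedD2 S) :
    hamiltonianSign S * hamiltonianSign S = 1 :=
  hS.signPattern.walkSign_mul_self fun _ hi => (hS.underlying_iff _ _).2 (D2.natCast_succ hi)

theorem shortCycleSign_mul_self (hS : IsSignedD2 S) :
    shortCycleSign S * shortCycleSign S = 1 :=
  hS.signPattern.walkSign_mul_self fun i hi =>
    (hS.underlying_iff _ _).2 ((D2.isCycleSeq_cycleAvoidingLast hS.two_le).2.2.1 i hi)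

theorem gauge_eq_of_val_eq_zero {v : Fin n} (hv : v.val = 0) : gauge S v = 1 := by
  rw [gauge, hv, walkSign_zero]

theorem gauge_eq_mul {a b : Fin n} (h : b.val = a.val + 1) :
    gauge S b = gauge S a * S a b := by
  rw [gauge, h, walkSign_succ, Fin.cast_val_eq_self, ← h, Fin.cast_val_eq_self, gauge]

theorem eq_gauge_mul_of_val_succ (hS : IsSignedD2 S) {a b : Fin n} (h : b.val = a.val + 1) :
    S a b = gauge S a * gauge S b := by
  rw [gauge_eq_mul h]
  linear_combination -S a b * hS.gauge_mul_self a

theorem eq_gauge_mul_hamiltonianSign (hS : IsSignedD2 S) {a b : Fin n} (ha : a.val = n - 1)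
    (hb : b.val = 0) : S a b = gauge S a * gauge S b * hamiltonianSign S := by
  have : hamiltonianSign S = gauge S a * S a b := by
    rw [hamiltonianSign, walkSign_of_pos _ (Nat.pos_of_neZero n), Fin.natCast_self,
      Fin.natCast_eq_of_val_eq ha, gauge, ha, show (0 : Fin n) = b from Fin.ext hb.symm]
  rw [this, gauge_eq_of_val_eq_zero hb]
  linear_combination -S a b * hS.gauge_mul_self a

theorem eq_gauge_mul_shortCycleSign_of_val_eq_zero (hS : IsSignedD2 S) {a b : Fin n}
    (ha : a.val = n - 2) (hb : b.val = 0) :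
    S a b = gauge S a * gauge S b * shortCycleSign S := by
  have hn := hS.two_le
  have : shortCycleSign S = gauge S a * S a b := by
    rw [shortCycleSign, walkSign_of_pos _ (by omega), gauge, ha, show n - 1 - 1 = n - 2 by omega,
      walkSign_congr fun i hi => by rw [D2.cycleAvoidingLast, Nat.mod_eq_of_lt (by omega)]]
    simp only [D2.cycleAvoidingLast, Nat.mod_self, Nat.mod_eq_of_lt (show n - 2 < n - 1 by omega)]
    rw [Fin.natCast_eq_of_val_eq ha, Fin.natCast_eq_of_val_eq hb]
  rw [this, gauge_eq_of_val_eq_zero hb]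
  linear_combination -S a b * hS.gauge_mul_self a

theorem eq_gauge_mul_shortCycleSign_of_val_eq_one (hS : IsSignedD2 S)
    (hsame : ShortCyclesSameSign S) {a b : Fin n} (ha : a.val = n - 1) (hb : b.val = 1) :
    S a b = gauge S a * gauge S b * shortCycleSign S := by
  have hn := hS.two_le
  set Q := walkSign S (fun i => ((i + 1 : ℕ) : Fin n)) (n - 2)
  have hp : shortCycleSign S = Q * S a b := by
    rw [shortCycleSign, ← hsame _ _ (D2.isCycleSeq_cycleAvoidingZero hn)
      (D2.isCycleSeq_cycleAvoidingLast hn), show n - 1 = n - 2 + 1 by omega, walkSign_succ',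
      walkSign_congr (f := fun i => D2.cycleAvoidingZero (i + 1))
        (g := fun i => ((i + 1 : ℕ) : Fin n)) fun i _ => if_neg (Nat.succ_ne_zero i)]
    simp only [D2.cycleAvoidingZero, if_pos, if_neg one_ne_zero, Fin.natCast_eq_of_val_eq ha,
      Fin.natCast_eq_of_val_eq hb, Q]
  have hga : gauge S a = Q * gauge S b := by
    rw [gauge, gauge, ha, hb, show n - 1 = n - 2 + 1 by omega, walkSign_succ', walkSign_succ,
      walkSign_zero, one_mul]
  have hQ : Q * Q = 1 := hS.signPattern.walkSign_mul_self fun i hi =>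
    (hS.underlying_iff _ _).2 (D2.natCast_succ (by omega))
  rw [hp, hga]
  linear_combination (-S a b * Q * Q) * hS.gauge_mul_self b - S a b * hQ

theorem exists_arc_decomp (hS : IsSignedD2 S) (hsame : ShortCyclesSameSign S) {a b : Fin n}
    (hab : S a b ≠ 0) :
    ∃ x y : ℕ, a.val + 1 = n * x + (n - 1) * y + b.val ∧
      S a b = gauge S a * gauge S b * hamiltonianSign S ^ x * shortCycleSign S ^ y := by
  have hn := hS.two_le
  rcases (hS.underlying_iff a b).1 hab with (h | ⟨ha, hb⟩ | ⟨ha, hb⟩) | ⟨ha, hb⟩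
  · exact ⟨0, 0, by omega, by simpa using hS.eq_gauge_mul_of_val_succ h⟩
  · exact ⟨1, 0, by omega, by simpa using hS.eq_gauge_mul_hamiltonianSign ha hb⟩
  · exact ⟨0, 1, by omega, by simpa using hS.eq_gauge_mul_shortCycleSign_of_val_eq_zero ha hb⟩
  · exact ⟨0, 1, by omega, by simpa using hS.eq_gauge_mul_shortCycleSign_of_val_eq_one hsame ha hb⟩

theorem exists_decomp_of_signedWalk (hS : IsSignedD2 S) (hsame : ShortCyclesSameSign S)
    {u v : Fin n} {l : ℕ} {σ : ℤ} (h : SignedWalk S u v l σ) :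
    ∃ X Y : ℕ, l + u.val = n * X + (n - 1) * Y + v.val ∧
      σ = gauge S u * gauge S v * hamiltonianSign S ^ X * shortCycleSign S ^ Y := by
  induction h with
  | nil => exact ⟨0, 0, by simp, by simpa using (hS.gauge_mul_self u).symm⟩
  | @snoc a b l σ _ hab ih =>
    obtain ⟨X, Y, hl, rfl⟩ := ih
    obtain ⟨x, y, hxy, hSab⟩ := hS.exists_arc_decomp hsame hab
    refine ⟨X + x, Y + y, by rw [mul_add, mul_add]; omega, ?_⟩
    rw [hSab, pow_add, pow_add]
    linear_combination (gauge S u * gauge S b * hamiltonianSign S ^ X * shortCycleSign S ^ Y *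
      hamiltonianSign S ^ x * shortCycleSign S ^ y) * hS.gauge_mul_self a

variable (S)

/-- There is a walk of length `l` from `u` to `v` whose sign is that of a walk through the arc
`n-1 → 0` `X` times and through the arcs `n-2 → 0`, `n-1 → 1` `Y` times in total. -/
def HasTypedWalk (u v : Fin n) (l X Y : ℕ) : Prop :=
  SignedWalk S u v l (gauge S u * gauge S v * hamiltonianSign S ^ X * shortCycleSign S ^ Y)

variable {S}

theorem HasTypedWalk.congr {u v : Fin n} {l X Y l' X' Y' : ℕ} (h : HasTypedWalk S u v l X Y)
    (hl : l = l') (hX : X = X') (hY : Y = Y') : HasTypedWalk S u v l' X' Y' :=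
  hl ▸ hX ▸ hY ▸ h

theorem HasTypedWalk.append (hS : IsSignedD2 S) {u w v : Fin n} {l₁ l₂ X₁ X₂ Y₁ Y₂ : ℕ}
    (h₁ : HasTypedWalk S u w l₁ X₁ Y₁) (h₂ : HasTypedWalk S w v l₂ X₂ Y₂) :
    HasTypedWalk S u v (l₁ + l₂) (X₁ + X₂) (Y₁ + Y₂) := by
  unfold HasTypedWalk at *
  convert SignedWalk.append h₁ h₂ using 1
  rw [pow_add, pow_add]
  linear_combination (-(gauge S u * gauge S v * hamiltonianSign S ^ X₁ * hamiltonianSign S ^ X₂ *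
    shortCycleSign S ^ Y₁ * shortCycleSign S ^ Y₂)) * hS.gauge_mul_self w

theorem HasTypedWalk.iterate (hS : IsSignedD2 S) {u : Fin n} {l X Y : ℕ}
    (h : HasTypedWalk S u u l X Y) (m : ℕ) : HasTypedWalk S u u (m * l) (m * X) (m * Y) := by
  induction m with
  | zero => simpa [HasTypedWalk, hS.gauge_mul_self] using SignedWalk.nil
  | succ m ih => exact (ih.append hS h).congr (by ring) (by ring) (by ring)

theorem hasTypedWalk_arc {a b : Fin n} {X Y : ℕ} (hab : S a b ≠ 0)
    (h : S a b = gauge S a * gauge S b * hamiltonianSign S ^ X * shortCycleSign S ^ Y) :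
    HasTypedWalk S a b 1 X Y := by
  unfold HasTypedWalk; rw [← h]; exact SignedWalk.arc hab

theorem hasTypedWalk_line (hS : IsSignedD2 S) {a b : Fin n} (hab : a ≤ b) :
    HasTypedWalk S a b (b.val - a.val) 0 0 := by
  obtain ⟨d, hd⟩ := Nat.exists_eq_add_of_le (Fin.le_def.1 hab)
  induction d generalizing b with
  | zero =>
    obtain rfl : b = a := Fin.ext hd
    simpa [HasTypedWalk, hS.gauge_mul_self] using SignedWalk.nil
  | succ d ih =>
    let c : Fin n := ⟨a.val + d, by omega⟩
    have hcb : b.val = c.val + 1 := hd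
    have hwalk := (ih (b := c) (Fin.le_def.2 (by simp [c])) rfl).append hS
      (hasTypedWalk_arc (X := 0) (Y := 0) ((hS.underlying_iff c b).2 (Or.inl (Or.inl hcb)))
        (by simpa using hS.eq_gauge_mul_of_val_succ hcb))
    exact hwalk.congr (by simp [c]; omega) rfl rfl

theorem hasTypedWalk_arc_hamiltonian (hS : IsSignedD2 S) {a b : Fin n} (ha : a.val = n - 1)
    (hb : b.val = 0) : HasTypedWalk S a b 1 1 0 :=
  hasTypedWalk_arc ((hS.underlying_iff a b).2 (Or.inl (Or.inr (Or.inl ⟨ha, hb⟩))))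
    (by simpa using hS.eq_gauge_mul_hamiltonianSign ha hb)

theorem hasTypedWalk_arc_of_val_eq_zero (hS : IsSignedD2 S) {a b : Fin n} (ha : a.val = n - 2)
    (hb : b.val = 0) : HasTypedWalk S a b 1 0 1 :=
  hasTypedWalk_arc ((hS.underlying_iff a b).2 (Or.inl (Or.inr (Or.inr ⟨ha, hb⟩))))
    (by simpa using hS.eq_gauge_mul_shortCycleSign_of_val_eq_zero ha hb)

theorem hasTypedWalk_arc_of_val_eq_one (hS : IsSignedD2 S) (hsame : ShortCyclesSameSign S)
    {a b : Fin n} (ha : a.val = n - 1) (hb : b.val = 1) : HasTypedWalk S a b 1 0 1 :=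
  hasTypedWalk_arc ((hS.underlying_iff a b).2 (Or.inr ⟨ha, hb⟩))
    (by simpa using hS.eq_gauge_mul_shortCycleSign_of_val_eq_one hsame ha hb)

theorem hasTypedWalk_hamiltonianCycle (hS : IsSignedD2 S) {a : Fin n} (ha : a.val = n - 1) :
    HasTypedWalk S a a n 1 0 :=
  ((hS.hasTypedWalk_arc_hamiltonian ha (Fin.val_zero n)).append hS
    (hS.hasTypedWalk_line (Fin.zero_le a))).congr (by simp; omega) rfl rfl

theorem hasTypedWalk_cycleAvoidingZero (hS : IsSignedD2 S) (hsame : ShortCyclesSameSign S)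
    {a : Fin n} (ha : a.val = n - 1) : HasTypedWalk S a a (n - 1) 0 1 := by
  have hn := hS.two_le
  let one : Fin n := ⟨1, by omega⟩
  exact ((hS.hasTypedWalk_arc_of_val_eq_one hsame (b := one) ha rfl).append hS
    (hS.hasTypedWalk_line (Fin.le_def.2 (by simp [one]; omega)))).congr
    (by simp [one]; omega) rfl rfl

theorem hasTypedWalk_cycleAvoidingLast (hS : IsSignedD2 S) {a : Fin n} (ha : a.val = 0) :
    HasTypedWalk S a a (n - 1) 0 1 := by
  have hn := hS.two_le
  let penult : Fin n := ⟨n - 2, by omega⟩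
  exact ((hS.hasTypedWalk_line (b := penult) (Fin.le_def.2 (by simp [penult]; omega))).append hS
    (hS.hasTypedWalk_arc_of_val_eq_zero rfl ha)).congr (by simp [penult]; omega) rfl rfl

theorem hasTypedWalk_of_one_le (hS : IsSignedD2 S) (hsame : ShortCyclesSameSign S)
    {u v : Fin n} {l X Y : ℕ} (hl : l + u.val = n * X + (n - 1) * Y + v.val) (hX : 1 ≤ X) :
    HasTypedWalk S u v l X Y := by
  have hn := hS.two_le
  have hu := u.isLt
  obtain ⟨X, rfl⟩ : ∃ X', X = X' + 1 := ⟨X - 1, by omega⟩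
  have hX : n * (X + 1) = X * n + n := by ring
  have hY : (n - 1) * Y = Y * (n - 1) := mul_comm _ _
  let last : Fin n := ⟨n - 1, by omega⟩
  -- `u → ⋯ → n-1`, the two cycles through `n-1`, then `n-1 → 0 → ⋯ → v`
  refine ((((hS.hasTypedWalk_line (b := last) (Fin.le_def.2 (by simp [last]; omega))).append hS
    ((hS.hasTypedWalk_hamiltonianCycle (a := last) rfl).iterate hS X)).append hS
    ((hS.hasTypedWalk_cycleAvoidingZero hsame (a := last) rfl).iterate hS Y)).append hS
    ((hS.hasTypedWalk_arc_hamiltonian (b := 0) rfl (Fin.val_zero n)).append hS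
    (hS.hasTypedWalk_line (Fin.zero_le v)))).congr ?_ (by ring) (by ring)
  simp only [last, Fin.val_zero] at hl ⊢
  omega

theorem hasTypedWalk_of_val_le (hS : IsSignedD2 S) {u v : Fin n} {l Y : ℕ}
    (hl : l + u.val = (n - 1) * Y + v.val) (hY : 1 ≤ Y) (hu : u.val ≤ n - 2) :
    HasTypedWalk S u v l 0 Y := by
  have hn := hS.two_le
  obtain ⟨Y, rfl⟩ : ∃ Y', Y = Y' + 1 := ⟨Y - 1, by omega⟩
  have hY : (n - 1) * (Y + 1) = Y * (n - 1) + (n - 1) := by ring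
  let penult : Fin n := ⟨n - 2, by omega⟩
  -- `u → ⋯ → n-2 → 0`, the cycle through `0`, then `0 → ⋯ → v`
  refine ((((hS.hasTypedWalk_line (b := penult) (Fin.le_def.2 hu)).append hS
    (hS.hasTypedWalk_arc_of_val_eq_zero rfl (Fin.val_zero n))).append hS
    ((hS.hasTypedWalk_cycleAvoidingLast (Fin.val_zero n)).iterate hS Y)).append hS
    (hS.hasTypedWalk_line (Fin.zero_le v))).congr ?_ (by ring) (by ring)
  simp only [penult, Fin.val_zero] at hl ⊢
  omega

theorem hasTypedWalk_of_one_le_val (hS : IsSignedD2 S) (hsame : ShortCyclesSameSign S)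
    {u v : Fin n} {l Y : ℕ} (hl : l + u.val = (n - 1) * Y + v.val) (hY : 1 ≤ Y)
    (hu : u.val = n - 1) (hv : 1 ≤ v.val) : HasTypedWalk S u v l 0 Y := by
  have hn := hS.two_le
  obtain ⟨Y, rfl⟩ : ∃ Y', Y = Y' + 1 := ⟨Y - 1, by omega⟩
  have hY : (n - 1) * (Y + 1) = Y * (n - 1) + (n - 1) := by ring
  let one : Fin n := ⟨1, by omega⟩
  -- the cycle through `n-1` avoiding `0`, then `n-1 → 1 → ⋯ → v`
  refine (((hS.hasTypedWalk_cycleAvoidingZero hsame hu).iterate hS Y).append hS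
    ((hS.hasTypedWalk_arc_of_val_eq_one hsame (b := one) hu rfl).append hS
    (hS.hasTypedWalk_line (Fin.le_def.2 hv)))).congr ?_ (by ring) (by ring)
  simp only [one] at hl ⊢
  omega

theorem hamiltonianSign_pow_ne (hS : IsSignedD2 S) (hsame : ShortCyclesSameSign S)
    (hnp : NonPowerful S) : hamiltonianSign S ^ (n - 1) ≠ shortCycleSign S ^ n := by
  intro h
  have hn := hS.two_le
  obtain ⟨u, v, l, hsssd⟩ := hnp
  obtain ⟨σ, σ', hσ, hσ', hne⟩ := hasSSSD_iff.1 hsssd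
  obtain ⟨X, Y, hl, rfl⟩ := hS.exists_decomp_of_signedWalk hsame hσ
  obtain ⟨X', Y', hl', rfl⟩ := hS.exists_decomp_of_signedWalk hsame hσ'
  apply hne
  simp only [mul_assoc]
  rw [pow_mul_pow_eq_of_pow_eq (Nat.coprime_self_sub_one (by omega)) (by omega) h
    (by omega : n * X + (n - 1) * Y = n * X' + (n - 1) * Y')]

theorem exists_eq_of_hasSSSD (hS : IsSignedD2 S) (hsame : ShortCyclesSameSign S) {u v : Fin n}
    {l : ℕ} (h : HasSSSD S u v l) : ∃ A B, l + u.val = n * A + (n - 1) * (B + n) + v.val := by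
  have hn := hS.two_le
  obtain ⟨σ, σ', hσ, hσ', hne⟩ := hasSSSD_iff.1 h
  obtain ⟨X, Y, hl, rfl⟩ := hS.exists_decomp_of_signedWalk hsame hσ
  obtain ⟨X', Y', hl', rfl⟩ := hS.exists_decomp_of_signedWalk hsame hσ'
  obtain ⟨A, B, hAB⟩ := exists_eq_mul_add_mul_add_of_ne (Nat.coprime_self_sub_one (by omega))
    (by omega) (by omega : n * X + (n - 1) * Y = n * X' + (n - 1) * Y')
    (by rintro ⟨⟩; exact hne rfl)
  exact ⟨A, B, by omega⟩

theorem hasSSSD_of_eq (hS : IsSignedD2 S) (hsame : ShortCyclesSameSign S) (hnp : NonPowerful S)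
    {u v : Fin n} {l A B : ℕ} (hl : l + u.val = n * A + (n - 1) * (B + n) + v.val)
    (hside : 1 ≤ A ∨ u.val ≤ n - 2 ∨ 1 ≤ v.val) : HasSSSD S u v l := by
  have hn := hS.two_le
  have hwalk : HasTypedWalk S u v l A (B + n) := by
    rcases Nat.eq_zero_or_pos A with rfl | hA
    · rw [mul_zero, zero_add] at hl
      by_cases hu : u.val ≤ n - 2
      · exact hS.hasTypedWalk_of_val_le hl (by omega) hu
      · exact hS.hasTypedWalk_of_one_le_val hsame hl (by omega) (by omega) (by omega)
    · exact hS.hasTypedWalk_of_one_le hsame hl hA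
  -- trading `n` cycles avoiding a vertex for `n - 1` Hamiltonian ones keeps the length
  refine hasSSSD_iff.2 ⟨_, _, hwalk, hS.hasTypedWalk_of_one_le hsame (X := A + (n - 1)) (Y := B)
    (by rw [hl]; ring) (by omega), fun h => hS.hamiltonianSign_pow_ne hsame hnp ?_⟩
  have hc : gauge S u * gauge S v * hamiltonianSign S ^ A * shortCycleSign S ^ B ≠ 0 := by
    simp [left_ne_zero_of_mul_eq_one (hS.gauge_mul_self u),
      left_ne_zero_of_mul_eq_one (hS.gauge_mul_self v),
      left_ne_zero_of_mul_eq_one hS.hamiltonianSign_mul_self,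
      left_ne_zero_of_mul_eq_one hS.shortCycleSign_mul_self]
  refine mul_left_cancel₀ hc ?_
  rw [pow_add, pow_add] at h
  linear_combination -h

theorem exists_hasSSSD_of_nonempty (hS : IsSignedD2 S) (hsame : ShortCyclesSameSign S)
    (hnp : NonPowerful S) {X : Finset (Fin n)} (hX : X.Nonempty) (v : Fin n) :
    ∃ x ∈ X, HasSSSD S x v ((2 * n - X.card) * (n - 1)) := by
  have hn := hS.two_le
  have hk := hX.card_pos
  obtain ⟨x, hxX, hx⟩ := X.exists_val_sub_add_card_le hX v
  refine ⟨x, hxX, ?_⟩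
  have hxn := x.isLt
  rcases le_or_gt v x with hvx | hxv
  · rw [Fin.coe_sub_iff_le.2 hvx] at hx
    have hvx := Fin.le_def.1 hvx
    refine hS.hasSSSD_of_eq hsame hnp (A := x.val - v.val) (B := n - X.card - (x.val - v.val))
      ?_ (by omega)
    zify [hvx, show X.card ≤ n by omega, show X.card ≤ 2 * n by omega, show 1 ≤ n by omega,
      show x.val - v.val ≤ n - X.card by omega]
    ring
  · rw [Fin.coe_sub_iff_lt.2 hxv] at hx
    have hxv := Fin.lt_def.1 hxv
    have hv := v.isLt
    refine hS.hasSSSD_of_eq hsame hnp (A := n - 1 - (v.val - x.val))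
      (B := v.val - x.val - X.card) ?_ (by omega)
    zify [hxv.le, show X.card ≤ 2 * n by omega, show 1 ≤ n by omega,
      show v.val - x.val ≤ n - 1 by omega, show X.card ≤ v.val - x.val by omega]
    ring

theorem setBase_le (hS : IsSignedD2 S) (hsame : ShortCyclesSameSign S) (hnp : NonPowerful S)
    {X : Finset (Fin n)} (hX : X.Nonempty) : setBase S X ≤ (2 * n - X.card) * (n - 1) :=
  Nat.sInf_le fun v => hS.exists_hasSSSD_of_nonempty hsame hnp hX v

theorem not_hasSSSD_of_lt (hS : IsSignedD2 S) (hsame : ShortCyclesSameSign S) {k q : ℕ}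
    (hk : 1 ≤ k) (hq : q < (2 * n - k) * (n - 1)) {x v : Fin n} (hx : x.val = 0 ∨ n - k < x.val)
    (hv : v.val = q % (n - 1) + 1) : ¬ HasSSSD S x v q := fun h => by
  obtain ⟨A, B, hAB⟩ := hS.exists_eq_of_hasSSSD hsame h
  rw [hv] at hAB
  exact (le_of_add_eq_mul_add_mul_add_mod hk x.isLt hx hAB).not_gt hq

theorem exists_card_eq_setBase_eq (hS : IsSignedD2 S) (hsame : ShortCyclesSameSign S)
    (hnp : NonPowerful S) {k : ℕ} (hk1 : 1 ≤ k) (hkn : k ≤ n) :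
    ∃ X : Finset (Fin n), X.card = k ∧ setBase S X = (2 * n - k) * (n - 1) := by
  have hn := hS.two_le
  let X₀ : Finset (Fin n) := insert 0 (Finset.Ioi ⟨n - k, by omega⟩)
  have hX₀ : X₀.card = k := by
    rw [Finset.card_insert_of_notMem (by simp), Fin.card_Ioi, Fin.val_mk]
    omega
  have hmem : ∀ x ∈ X₀, x.val = 0 ∨ n - k < x.val := by
    simp [X₀, Fin.lt_def]
  refine ⟨X₀, hX₀, le_antisymm (hX₀ ▸ hS.setBase_le hsame hnp (Finset.insert_nonempty _ _)) ?_⟩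
  refine le_csInf ⟨_, fun v => hS.exists_hasSSSD_of_nonempty hsame hnp
    (Finset.insert_nonempty _ _) v⟩ fun q hq => not_lt.1 fun hlt => ?_
  have hmod := Nat.mod_lt q (show 0 < n - 1 by omega)
  obtain ⟨x, hx, hxq⟩ := hq ⟨q % (n - 1) + 1, by omega⟩
  exact hS.not_hasSSSD_of_lt hsame hk1 hlt (hmem x hx) rfl hxq

end IsSignedD2

theorem upperBase_D2_same_signs_general {n : ℕ} (hn : 2 ≤ n) (k : ℕ) (hk1 : 1 ≤ k) (hkn : k ≤ n)
    (S : Fin n → Fin n → ℤ) (hsp : SignPattern S)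
    (hund : ∀ u v, Underlying S u v ↔ D2 n u v)
    (hnp : NonPowerful S)
    (hsame : ∀ f g : ℕ → Fin n, IsCycleSeq (D2 n) f (n - 1) →
      IsCycleSeq (D2 n) g (n - 1) → walkSign S f (n - 1) = walkSign S g (n - 1)) :
    upperBase S k = (2 * n - k) * (n - 1) := by
  have : NeZero n := ⟨by omega⟩
  have hS : IsSignedD2 S := ⟨hn, hsp, hund⟩
  obtain ⟨X₀, hX₀, hbase⟩ := hS.exists_card_eq_setBase_eq hsame hnp hk1 hkn
  refine IsGreatest.csSup_eq ⟨⟨X₀, hX₀, hbase⟩, ?_⟩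
  rintro _ ⟨X, rfl, rfl⟩
  exact hS.setBase_le hsame hnp (Finset.card_pos.1 (by omega))

/-- Theorem 3.2(2): if the two cycles of length `n-1` of `S₂` have the same sign,
then `L(S₂,k) = (2n-k)(n-1)`. -/
theorem upperBase_D2_same_signs {n : ℕ} (hn : 2 ≤ n) (k : ℕ) (hk1 : 1 ≤ k) (hkn : k ≤ n)
    (S : Fin n → Fin n → ℤ) (hsp : SignPattern S)
    (hund : ∀ u v, Underlying S u v ↔ D2 n u v)
    (hprim : Primitive (Underlying S)) (hnp : NonPowerful S)
    (hsame : ∀ f g : ℕ → Fin n, IsCycleSeq (D2 n) f (n - 1) →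
      IsCycleSeq (D2 n) g (n - 1) → walkSign S f (n - 1) = walkSign S g (n - 1)) :
    upperBase S k = (2 * n - k) * (n - 1) :=
  upperBase_D2_same_signs_general hn k hk1 hkn S hsp hund hnp hsame
end

section
/- Let D be a primitive digraph of order n, let s be the length of a shortest cycle of D, and let 1 ≤ k ≤ n. Then F(D,k) ≤ (n-k-1)s + n. -/
section Walks

variable {n : ℕ} {A : Fin n → Fin n → Prop}

theorem hasWalk_zero_iff {u v : Fin n} : HasWalk A u v 0 ↔ u = v :=
  ⟨fun ⟨_, h0, hl, _⟩ => h0.symm.trans hl, fun h => ⟨fun _ => u, rfl, h, by simp⟩⟩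

theorem hasWalk_succ_iff {u v : Fin n} {l : ℕ} :
    HasWalk A u v (l + 1) ↔ ∃ w, HasWalk A u w l ∧ A w v := by
  constructor
  · rintro ⟨f, h0, hl, hf⟩
    exact ⟨f l, ⟨f, h0, rfl, fun i hi => hf i (by omega)⟩, hl ▸ hf l (by omega)⟩
  · rintro ⟨w, ⟨f, h0, hl, hf⟩, hwv⟩
    refine ⟨fun i => if i ≤ l then f i else v, by simpa using h0, by simp, fun i hi => ?_⟩
    rcases Nat.lt_or_ge i l with hil | hil
    · simpa [hil.le, Nat.succ_le_of_lt hil] using hf i hil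
    · obtain rfl : i = l := by omega
      simpa [hl] using hwv

theorem hasWalk_add_iff {u v : Fin n} {a b : ℕ} :
    HasWalk A u v (a + b) ↔ ∃ w, HasWalk A u w a ∧ HasWalk A w v b := by
  induction b generalizing v with
  | zero => simp [hasWalk_zero_iff]
  | succ b ih =>
    rw [← Nat.add_assoc, hasWalk_succ_iff]
    simp only [hasWalk_succ_iff, ih]
    grind

theorem HasWalk.append {u w v : Fin n} {a b : ℕ} (h₁ : HasWalk A u w a)
    (h₂ : HasWalk A w v b) : HasWalk A u v (a + b) :=
  hasWalk_add_iff.2 ⟨w, h₁, h₂⟩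

theorem hasWalk_of_adj_self {u : Fin n} (h : A u u) (l : ℕ) : HasWalk A u u l :=
  ⟨fun _ => u, rfl, rfl, fun _ _ => h⟩

theorem hasWalk_of_forall_adj (h : ∀ u v, A u v) (u v : Fin n) {l : ℕ} (hl : 0 < l) :
    HasWalk A u v l := by
  obtain ⟨l, rfl⟩ := Nat.exists_eq_add_of_lt hl
  exact hasWalk_succ_iff.2 ⟨u, hasWalk_of_adj_self (h u u) _, h u v⟩

theorem hasWalk_of_adj_seq {f : ℕ → Fin n} {l : ℕ} (hf : ∀ i < l, A (f i) (f (i + 1)))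
    {i j : ℕ} (hij : i ≤ j) (hjl : j ≤ l) : HasWalk A (f i) (f j) (j - i) :=
  ⟨fun t => f (i + t), rfl, by simp only [Nat.add_sub_cancel' hij],
    fun t ht => hf (i + t) (by omega)⟩

def walkPow (A : Fin n → Fin n → Prop) (m : ℕ) : Fin n → Fin n → Prop :=
  fun u v => HasWalk A u v m

theorem hasWalk_walkPow_iff {m l : ℕ} {u v : Fin n} :
    HasWalk (walkPow A m) u v l ↔ HasWalk A u v (l * m) := by
  induction l generalizing v with
  | zero => simp [hasWalk_zero_iff]
  | succ l ih => simp only [hasWalk_succ_iff, ih, Nat.succ_mul, hasWalk_add_iff, walkPow]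

theorem primitive_walkPow (hA : Primitive A) {m : ℕ} (hm : 0 < m) : Primitive (walkPow A m) := by
  obtain ⟨p, hp, hpA⟩ := hA
  refine ⟨p, hp, fun u v => hasWalk_walkPow_iff.2 ?_⟩
  rw [Nat.mul_comm, ← hasWalk_walkPow_iff]
  exact hasWalk_of_forall_adj hpA u v hm

/-- A shortest walk from `X` to `z` revisits no vertex and meets `X` only at its start. -/
theorem exists_hasWalk_le_card_compl (X : Finset (Fin n)) {z : Fin n}
    (hz : ∃ l, ∃ x ∈ X, HasWalk A x z l) :
    ∃ x ∈ X, ∃ d ≤ n - X.card, HasWalk A x z d := by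
  classical
  obtain ⟨x, hx, g, rfl, hgz, hg⟩ := Nat.find_spec hz
  set d := Nat.find hz
  have shortest : ∀ l < d, ∀ y ∈ X, ¬ HasWalk A y z l :=
    fun l hl y hy h => Nat.find_min hz hl ⟨y, hy, h⟩
  have hout : ∀ i ∈ Finset.Icc 1 d, g i ∉ X := by
    intro i hi hiX
    rw [Finset.mem_Icc] at hi
    exact shortest (d - i) (by omega) _ hiX (hgz ▸ hasWalk_of_adj_seq hg hi.2 le_rfl)
  have hnodup : ∀ i j, 1 ≤ i → i < j → j ≤ d → g i ≠ g j := by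
    intro i j hi hij hj heq
    have hcut := (hasWalk_of_adj_seq hg (Nat.zero_le i) (by omega)).append
      (heq ▸ hasWalk_of_adj_seq hg hj le_rfl)
    exact shortest _ (by omega) _ hx (hgz ▸ hcut)
  have hinj : Set.InjOn g (Finset.Icc 1 d) := by
    intro i hi j hj heq
    simp only [Finset.coe_Icc, Set.mem_Icc] at hi hj
    by_contra hne
    rcases Nat.lt_or_gt_of_ne hne with h | h
    · exact hnodup i j hi.1 h hj.2 heq
    · exact hnodup j i hj.1 h hi.2 heq.symm
  refine ⟨g 0, hx, d, ?_, g, rfl, hgz, hg⟩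
  calc d = ((Finset.Icc 1 d).image g).card := by rw [Finset.card_image_of_injOn hinj]; simp
    _ ≤ Xᶜ.card := Finset.card_le_card fun y hy => by
        obtain ⟨i, hi, rfl⟩ := Finset.mem_image.1 hy
        exact Finset.mem_compl.2 (hout i hi)
    _ = n - X.card := by rw [Finset.card_compl, Fintype.card_fin]

/-- In `walkPow A s` the vertex `c` carries a loop, so walks from `X` to `c` can be padded
to length `n - |X|`. -/
theorem Primitive.exists_hasWalk_mul_of_hasWalk_self (hA : Primitive A) {s : ℕ} (hs : 0 < s)
    {c : Fin n} (hc : HasWalk A c c s) {X : Finset (Fin n)} (hX : X.Nonempty) :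
    ∃ x ∈ X, HasWalk A x c ((n - X.card) * s) := by
  obtain ⟨x₀, hx₀⟩ := hX
  obtain ⟨p, -, hp⟩ := primitive_walkPow hA hs
  obtain ⟨x, hx, m, hm, hxc⟩ := exists_hasWalk_le_card_compl (A := walkPow A s) X
    ⟨p, x₀, hx₀, hp x₀ c⟩
  have hpad := hxc.append (hasWalk_of_adj_self (A := walkPow A s) hc (n - X.card - m))
  rw [Nat.add_sub_cancel' hm, hasWalk_walkPow_iff] at hpad
  exact ⟨x, hx, hpad⟩

namespace IsCycleSeq

variable {f : ℕ → Fin n} {s : ℕ}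

theorem adj_mod (hf : IsCycleSeq A f s) (t : ℕ) : A (f (t % s)) (f ((t + 1) % s)) := by
  obtain ⟨hs, hclosed, hadj, -⟩ := hf
  have hr := Nat.mod_lt t hs
  rw [← Nat.mod_add_mod]
  rcases Nat.lt_or_ge (t % s + 1) s with h | h
  · rw [Nat.mod_eq_of_lt h]
    exact hadj _ hr
  · have hwrap : t % s + 1 = s := by omega
    rw [hwrap, Nat.mod_self, ← hclosed]
    simpa [hwrap] using hadj _ hr

theorem hasWalk_mod (hf : IsCycleSeq A f s) (a e : ℕ) :
    HasWalk A (f (a % s)) (f ((a + e) % s)) e :=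
  ⟨fun t => f ((a + t) % s), rfl, rfl, fun i _ => hf.adj_mod (a + i)⟩

theorem hasWalk_self (hf : IsCycleSeq A f s) (a : ℕ) : HasWalk A (f (a % s)) (f (a % s)) s := by
  simpa using hf.hasWalk_mod a s

theorem exists_hasWalk_to (hf : IsCycleSeq A f s) {r : ℕ} (hr : r < s) (e : ℕ) :
    ∃ a, HasWalk A (f (a % s)) (f r) e := by
  refine ⟨r + e * (s - 1), ?_⟩
  have hwind : r + e * (s - 1) + e = r + e * s := by
    rw [Nat.add_assoc, ← Nat.mul_succ, Nat.succ_eq_add_one, Nat.sub_add_cancel hf.1]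
  simpa [hwind, Nat.mod_eq_of_lt hr] using hf.hasWalk_mod (r + e * (s - 1)) e

theorem card_image_range (hf : IsCycleSeq A f s) : ((Finset.range s).image f).card = s := by
  rw [Finset.card_image_of_injOn, Finset.card_range]
  exact fun i hi j hj => hf.2.2.2 i (by simpa using hi) j (by simpa using hj)

theorem length_le (hf : IsCycleSeq A f s) : s ≤ n := by
  simpa [hf.card_image_range] using ((Finset.range s).image f).card_le_univ

end IsCycleSeq

theorem Primitive.setExp_le_of_isCycleSeq (hA : Primitive A) {f : ℕ → Fin n} {s : ℕ}
    (hf : IsCycleSeq A f s) {X : Finset (Fin n)} (hX : X.Nonempty) :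
    setExp A X ≤ (n - X.card) * s + (n - s) := by
  refine Nat.sInf_le fun v => ?_
  obtain ⟨p, -, hp⟩ := id hA
  obtain ⟨w, hwW, d, hd, hwv⟩ := exists_hasWalk_le_card_compl ((Finset.range s).image f)
    ⟨p, f 0, Finset.mem_image_of_mem f (Finset.mem_range.2 hf.1), hp _ v⟩
  rw [hf.card_image_range] at hd
  obtain ⟨r, hr, rfl⟩ := Finset.mem_image.1 hwW
  obtain ⟨a, hcw⟩ := hf.exists_hasWalk_to (Finset.mem_range.1 hr) (n - s - d)
  obtain ⟨x, hx, hxc⟩ := hA.exists_hasWalk_mul_of_hasWalk_self hf.1 (hf.hasWalk_self a) hX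
  refine ⟨x, hx, ?_⟩
  have hwalk := (hxc.append hcw).append hwv
  rwa [Nat.add_assoc, Nat.sub_add_cancel hd] at hwalk

end Walks

/-- Lemma 2.3: `F(D,k) ≤ (n-k-1)s + n`, where `s` is the length of a shortest
cycle of the primitive digraph `D`. -/
theorem upperMultiexp_le_shortest_cycle {n : ℕ} (D : Fin n → Fin n → Prop)
    (hprim : Primitive D) (s : ℕ)
    (hs : IsLeast {p | ∃ f : ℕ → Fin n, IsCycleSeq D f p} s)
    (k : ℕ) (hk1 : 1 ≤ k) (hkn : k ≤ n) :
    (upperMultiexp D k : ℤ) ≤ ((n : ℤ) - k - 1) * s + n := by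
  obtain ⟨f, hf⟩ := hs.1
  have hbound : upperMultiexp D k ≤ (n - k) * s + (n - s) := by
    refine csSup_le' ?_
    rintro _ ⟨X, rfl, rfl⟩
    exact hprim.setExp_le_of_isCycleSeq hf (Finset.card_pos.1 (by omega))
  have hcast : (((n - k) * s + (n - s) : ℕ) : ℤ) = ((n : ℤ) - k - 1) * s + n := by
    push_cast [Nat.cast_sub hkn, Nat.cast_sub hf.length_le]
    ring
  rw [← hcast]
  exact_mod_cast hbound
end
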